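/- arXiv:0803.2542 — 9 statements merged into one kernel-verified Lean document; each statement's English description precedes it below -/
import Mathlib

section
/- Let Q be a non-abelian group of order pq, where p < q are primes. Then Q has exactly one subgroup F of order q and exactly q subgroups H₀,…,H_{q−1} of order p, and in the integral group ring ℤQ the identity ∑_{i=0}^{q−1} Ĥ_i + F̂ = Q̂ + q·1 holds, where K̂ := ∑_{k∈K} k for a subgroup K and Q̂ := ∑_{g∈Q} g. -/
/-!
By Sylow's theorems the number of Sylow `q`-subgroups divides `p < q` and is `1` mod `q`, so it
is `1`; the number of Sylow `p`-subgroups divides `q`, and it cannot be `1`, since then `Q` would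
be the union of its two proper Sylow subgroups. As `Q` is not cyclic, every `g ≠ 1` has order `p`
or `q`, and a subgroup of prime order is generated by any of its non-identity elements, so `g`
lies in exactly one of the `q + 1` subgroups of prime order. Comparing coefficients, both sides
of the identity are `q + 1` at `1` and `1` everywhere else.
-/

open scoped Classical

namespace MonoidAlgebra

variable {R G : Type*} [Semiring R] [Group G] [Fintype G]

theorem coeff_sum_single_subgroup (K : Subgroup G) (g : G) :
    (∑ k : K, single (k : G) (1 : R)).coeff g = if g ∈ K then 1 else 0 := by
  rw [coeff_sum, Finset.sum_apply']
  simp only [coeff_single, Finsupp.single_apply]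
  split_ifs with hg
  · rw [Finset.sum_eq_single_of_mem ⟨g, hg⟩ (Finset.mem_univ _)
      fun k _ hk => if_neg fun h => hk (Subtype.ext h)]
    simp
  · exact Finset.sum_eq_zero fun k _ => if_neg fun h : (k : G) = g => hg (h ▸ k.2)

theorem sum_sum_single_add_one_of_existsUnique_mem {ι : Type*} [Fintype ι] (K : ι → Subgroup G)
    (hK : ∀ g ≠ (1 : G), ∃! i, g ∈ K i) :
    ∑ i, ∑ k : K i, single (k : G) (1 : R) + 1 = ∑ g, single g 1 + Fintype.card ι • 1 := by
  ext g
  have hsum : (∑ i, ∑ k : K i, single (k : G) (1 : R)).coeff g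
      = (Finset.univ.filter fun i => g ∈ K i).card := by
    rw [coeff_sum, Finset.sum_apply', ← Finset.sum_boole]
    simp_rw [coeff_sum_single_subgroup]
  have huniv : (∑ g', single g' (1 : R)).coeff g = 1 := by
    simp [coeff_sum, Finset.sum_apply', coeff_single, Finsupp.single_apply]
  rw [coeff_add, coeff_add, Finsupp.add_apply, Finsupp.add_apply, hsum, huniv, coeff_smul,
    Finsupp.smul_apply, one_def, coeff_single, Finsupp.single_apply]
  rcases eq_or_ne g 1 with rfl | hg
  · simp [add_comm]
  · obtain ⟨i, hi, huniq⟩ := hK g hg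
    have : Finset.univ.filter (fun j => g ∈ K j) = {i} := by
      ext j; simpa using ⟨huniq j, fun h => h ▸ hi⟩
    simp [this, Ne.symm hg]

end MonoidAlgebra

theorem Nat.Prime.factorization_mul_self_of_not_dvd {p m : ℕ} (hp : p.Prime) (hm : ¬ p ∣ m) :
    (p * m).factorization p = 1 := by
  have hm0 : m ≠ 0 := by rintro rfl; exact hm (dvd_zero p)
  rw [Nat.factorization_mul hp.ne_zero hm0, Finsupp.add_apply, hp.factorization_self,
    Nat.factorization_eq_zero_of_not_dvd hm]

namespace Subgroup

variable {G : Type*} [Group G]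

theorem zpowers_eq_of_mem_of_card_prime {K : Subgroup G} (hK : (Nat.card K).Prime)
    {g : G} (hg : g ∈ K) (hg1 : g ≠ 1) : zpowers g = K := by
  have : Finite K := Nat.finite_of_card_ne_zero hK.ne_zero
  have hord : orderOf g = Nat.card K :=
    (hK.eq_one_or_self_of_dvd _ (K.orderOf_dvd_natCard hg)).resolve_left (by simpa using hg1)
  refine eq_of_le_of_card_ge (zpowers_le.mpr hg) ?_
  rw [Nat.card_zpowers, hord]

theorem existsUnique_mem_of_injective_of_card_prime {ι : Type*} {K : ι → Subgroup G}
    (hinj : Function.Injective K) (hprime : ∀ i, (Nat.card (K i)).Prime)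
    {g : G} (hg : g ≠ 1) (hcover : ∃ i, g ∈ K i) : ∃! i, g ∈ K i := by
  obtain ⟨i, hi⟩ := hcover
  exact ⟨i, hi, fun j hj => hinj <|
    (zpowers_eq_of_mem_of_card_prime (hprime j) hj hg).symm.trans
      (zpowers_eq_of_mem_of_card_prime (hprime i) hi hg)⟩

theorem eq_top_or_eq_top_of_forall_mem_or_mem {H K : Subgroup G}
    (h : ∀ g, g ∈ H ∨ g ∈ K) : H = ⊤ ∨ K = ⊤ := by
  simp only [eq_top_iff']
  by_contra! ⟨⟨a, ha⟩, ⟨b, hb⟩⟩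
  have haK : a ∈ K := (h a).resolve_left ha
  have hbH : b ∈ H := (h b).resolve_right hb
  rcases h (a * b) with hab | hab
  · exact ha (by simpa using H.mul_mem hab (H.inv_mem hbH))
  · exact hb (by simpa using K.mul_mem (K.inv_mem haK) hab)

end Subgroup

theorem MonoidAlgebra.sum_sum_single_add_sum_single_of_card_prime {G ι : Type*} [Group G]
    [Fintype G] [Fintype ι] {R : Type*} [Ring R] (H : ι → Subgroup G) (F : Subgroup G)
    (hH : Function.Injective H) (hFH : ∀ i, F ≠ H i) (hHprime : ∀ i, (Nat.card (H i)).Prime)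
    (hFprime : (Nat.card F).Prime) (hcover : ∀ g ≠ (1 : G), g ∈ F ∨ ∃ i, g ∈ H i) :
    ∑ i, ∑ k : H i, single (k : G) (1 : R) + ∑ k : F, single (k : G) 1
      = ∑ g, single g 1 + Fintype.card ι • 1 := by
  let K : Option ι → Subgroup G := fun o => o.elim F H
  have hKinj : Function.Injective K := by
    rintro (_ | i) (_ | j) h
    exacts [rfl, absurd h (hFH j), absurd h.symm (hFH i), congrArg some (hH h)]
  have hKprime : ∀ o, (Nat.card (K o)).Prime := by
    rintro (_ | i)
    exacts [hFprime, hHprime i]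
  have hKcover : ∀ g ≠ (1 : G), ∃ o, g ∈ K o := fun g hg =>
    (hcover g hg).elim (fun hgF => ⟨none, hgF⟩) fun ⟨i, hi⟩ => ⟨some i, hi⟩
  have := sum_sum_single_add_one_of_existsUnique_mem (R := R) K fun g hg =>
    Subgroup.existsUnique_mem_of_injective_of_card_prime hKinj hKprime hg (hKcover g hg)
  rw [Fintype.sum_option, Fintype.card_option, succ_nsmul, ← add_assoc] at this
  rw [add_comm]
  exact add_right_cancel this

namespace Sylow

variable {G : Type*} [Group G] [Finite G] {p m : ℕ} [hp : Fact p.Prime]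

theorem card_eq_of_card_eq_prime_mul (hG : Nat.card G = p * m) (hm : ¬ p ∣ m)
    (P : Sylow p G) : Nat.card P = p := by
  rw [P.card_eq_multiplicity, hG, hp.out.factorization_mul_self_of_not_dvd hm, pow_one]

theorem index_eq_of_card_eq_prime_mul (hG : Nat.card G = p * m) (hm : ¬ p ∣ m)
    (P : Sylow p G) : (P : Subgroup G).index = m := by
  have := (P : Subgroup G).card_mul_index
  rw [card_eq_of_card_eq_prime_mul hG hm, hG] at this
  exact Nat.eq_of_mul_eq_mul_left hp.out.pos this

theorem exists_coe_eq_of_card_eq (hG : Nat.card G = p * m) (hm : ¬ p ∣ m)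
    {K : Subgroup G} (hK : Nat.card K = p) : ∃ P : Sylow p G, (P : Subgroup G) = K :=
  ⟨ofCard K (by rw [hK, hG, hp.out.factorization_mul_self_of_not_dvd hm, pow_one]),
    coe_ofCard _ _⟩

theorem exists_mem_of_orderOf_eq (hG : Nat.card G = p * m) (hm : ¬ p ∣ m)
    {g : G} (hg : orderOf g = p) : ∃ P : Sylow p G, g ∈ P := by
  obtain ⟨P, hP⟩ := exists_coe_eq_of_card_eq hG hm (K := Subgroup.zpowers g)
    (by rw [Nat.card_zpowers, hg])
  exact ⟨P, show g ∈ (P : Subgroup G) from hP ▸ Subgroup.mem_zpowers g⟩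

end Sylow

section OrderPrimeMulPrime

variable {G : Type*} [Group G] [Finite G] {p q : ℕ} [hq : Fact q.Prime]

theorem card_sylow_eq_one_of_card_eq_mul_of_lt (hp : 0 < p) (hG : Nat.card G = p * q)
    (hpq : p < q) : Nat.card (Sylow q G) = 1 := by
  obtain ⟨P⟩ : Nonempty (Sylow q G) := inferInstance
  have hdvd : Nat.card (Sylow q G) ∣ p :=
    P.index_eq_of_card_eq_prime_mul (by rw [hG, mul_comm]) (Nat.not_dvd_of_pos_of_lt hp hpq) ▸
      P.card_dvd_index
  have hlt : Nat.card (Sylow q G) < q := (Nat.le_of_dvd hp hdvd).trans_lt hpq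
  simpa [Nat.ModEq, Nat.mod_eq_of_lt hlt, Nat.mod_eq_of_lt hq.out.one_lt] using
    card_sylow_modEq_one q G

variable [hp : Fact p.Prime]

theorem orderOf_eq_or_eq_of_card_eq_mul_of_not_isCyclic (hG : Nat.card G = p * q)
    (hcyc : ¬ IsCyclic G) {g : G} (hg : g ≠ 1) : orderOf g = p ∨ orderOf g = q := by
  obtain ⟨a, b, ha, hb, hab⟩ := Nat.dvd_mul.mp (hG ▸ orderOf_dvd_natCard g)
  rcases hp.out.eq_one_or_self_of_dvd a ha with rfl | rfl <;>
    rcases hq.out.eq_one_or_self_of_dvd b hb with rfl | rfl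
  · exact absurd (orderOf_eq_one_iff.mp (by simpa using hab.symm)) hg
  · simp [← hab]
  · simp [← hab]
  · exact absurd (isCyclic_of_orderOf_eq_card g (hab.symm.trans hG.symm)) hcyc

theorem exists_sylow_mem_of_card_eq_mul_of_not_isCyclic (hG : Nat.card G = p * q) (hpq : p ≠ q)
    (hcyc : ¬ IsCyclic G) {g : G} (hg : g ≠ 1) :
    (∃ P : Sylow p G, g ∈ P) ∨ ∃ F : Sylow q G, g ∈ F := by
  rcases orderOf_eq_or_eq_of_card_eq_mul_of_not_isCyclic hG hcyc hg with h | h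
  · exact Or.inl (Sylow.exists_mem_of_orderOf_eq hG
      (fun h => hpq ((Nat.prime_dvd_prime_iff_eq hp.out hq.out).mp h)) h)
  · exact Or.inr (Sylow.exists_mem_of_orderOf_eq (by rw [hG, mul_comm])
      (fun h => hpq ((Nat.prime_dvd_prime_iff_eq hq.out hp.out).mp h).symm) h)

theorem card_sylow_eq_of_card_eq_mul_of_not_isCyclic (hG : Nat.card G = p * q) (hpq : p ≠ q)
    (hcyc : ¬ IsCyclic G) (hq1 : Nat.card (Sylow q G) = 1) : Nat.card (Sylow p G) = q := by
  obtain ⟨P⟩ : Nonempty (Sylow p G) := inferInstance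
  obtain ⟨F⟩ : Nonempty (Sylow q G) := inferInstance
  have hq_dvd : ¬ q ∣ p := fun h => hpq ((Nat.prime_dvd_prime_iff_eq hq.out hp.out).mp h).symm
  have hp_dvd : ¬ p ∣ q := fun h => hpq ((Nat.prime_dvd_prime_iff_eq hp.out hq.out).mp h)
  have hG' : Nat.card G = q * p := by rw [hG, mul_comm]
  refine (hq.out.eq_one_or_self_of_dvd _
    (P.index_eq_of_card_eq_prime_mul hG hp_dvd ▸ P.card_dvd_index)).resolve_left fun hp1 => ?_
  have : Subsingleton (Sylow p G) := (Nat.card_eq_one_iff_unique.mp hp1).1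
  have : Subsingleton (Sylow q G) := (Nat.card_eq_one_iff_unique.mp hq1).1
  have hcover : ∀ g : G, g ∈ (P : Subgroup G) ∨ g ∈ (F : Subgroup G) := by
    intro g
    rcases eq_or_ne g 1 with rfl | hg
    · exact Or.inl (one_mem _)
    rcases exists_sylow_mem_of_card_eq_mul_of_not_isCyclic hG hpq hcyc hg with
      ⟨P', hP'⟩ | ⟨F', hF'⟩
    exacts [Or.inl (Subsingleton.elim P' P ▸ hP'), Or.inr (Subsingleton.elim F' F ▸ hF')]
  rcases Subgroup.eq_top_or_eq_top_of_forall_mem_or_mem hcover with h | h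
  · have := (Subgroup.card_eq_iff_eq_top _).mpr h
    rw [P.card_eq_of_card_eq_prime_mul hG hp_dvd, hG] at this
    exact hq.out.one_lt.ne' ((Nat.mul_eq_left hp.out.ne_zero).mp this.symm)
  · have := (Subgroup.card_eq_iff_eq_top _).mpr h
    rw [F.card_eq_of_card_eq_prime_mul hG' hq_dvd, hG'] at this
    exact hp.out.one_lt.ne' ((Nat.mul_eq_left hq.out.ne_zero).mp this.symm)

end OrderPrimeMulPrime

/-- A non-abelian group `Q` of order `pq` (`p < q` primes) has exactly one
subgroup `F` of order `q` and exactly `q` subgroups `H₀, …, H_{q-1}` of order `p`, and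
in `ℤQ` the identity `∑ Ĥᵢ + F̂ = Q̂ + q·1` holds. -/
theorem stmt_1 {p q : ℕ} (hp : p.Prime) (hq : q.Prime) (hpq : p < q)
    (Q : Type) [Group Q] [Fintype Q] (hQ : Fintype.card Q = p * q)
    (hna : ¬ ∀ a b : Q, a * b = b * a) :
    ∃ (F : Subgroup Q) (H : Fin q → Subgroup Q),
      Nat.card F = q ∧ (∀ K : Subgroup Q, Nat.card K = q → K = F) ∧
      Function.Injective H ∧ (∀ i, Nat.card (H i) = p) ∧
      (∀ K : Subgroup Q, Nat.card K = p → ∃ i, K = H i) ∧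
      (∑ i, ∑ k : H i, (MonoidAlgebra.single (k : Q) (1 : ℤ) : MonoidAlgebra ℤ Q))
          + ∑ k : F, MonoidAlgebra.single (k : Q) (1 : ℤ)
        = (∑ g : Q, MonoidAlgebra.single g (1 : ℤ)) + (q : ℕ) • (1 : MonoidAlgebra ℤ Q) := by
  have : Fact p.Prime := ⟨hp⟩
  have : Fact q.Prime := ⟨hq⟩
  have hG : Nat.card Q = p * q := by rw [Nat.card_eq_fintype_card, hQ]
  have hG' : Nat.card Q = q * p := by rw [hG, mul_comm]
  have hp_dvd : ¬ p ∣ q := (Nat.prime_dvd_prime_iff_eq hp hq).not.mpr hpq.ne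
  have hq_dvd : ¬ q ∣ p := Nat.not_dvd_of_pos_of_lt hp.pos hpq
  have hcyc : ¬ IsCyclic Q := fun _ => hna IsMulCommutative.is_comm.comm
  have hq1 := card_sylow_eq_one_of_card_eq_mul_of_lt hp.pos hG hpq
  have : Subsingleton (Sylow q Q) := (Nat.card_eq_one_iff_unique.mp hq1).1
  obtain ⟨F⟩ : Nonempty (Sylow q Q) := inferInstance
  let e : Fin q ≃ Sylow p Q := (Finite.equivFinOfCardEq
    (card_sylow_eq_of_card_eq_mul_of_not_isCyclic hG hpq.ne hcyc hq1)).symm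
  let H : Fin q → Subgroup Q := fun i => e i
  have hFcard := F.card_eq_of_card_eq_prime_mul hG' hq_dvd
  have hHcard (i : Fin q) : Nat.card (H i) = p := (e i).card_eq_of_card_eq_prime_mul hG hp_dvd
  have hHinj : Function.Injective H := fun i j h => e.injective (Sylow.ext h)
  have hcover : ∀ g ≠ (1 : Q), g ∈ (F : Subgroup Q) ∨ ∃ i, g ∈ H i := by
    intro g hg
    rcases exists_sylow_mem_of_card_eq_mul_of_not_isCyclic hG hpq.ne hcyc hg with
      ⟨P, hP⟩ | ⟨F', hF'⟩
    · exact Or.inr ⟨e.symm P, by simpa [H] using show g ∈ (P : Subgroup Q) from hP⟩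
    · exact Or.inl (Subsingleton.elim F' F ▸ hF')
  refine ⟨F, H, hFcard, fun K hK => ?_, hHinj, hHcard, fun K hK => ?_, ?_⟩
  · obtain ⟨F', rfl⟩ := Sylow.exists_coe_eq_of_card_eq hG' hq_dvd hK
    rw [Subsingleton.elim F' F]
  · obtain ⟨P, rfl⟩ := Sylow.exists_coe_eq_of_card_eq hG hp_dvd hK
    exact ⟨e.symm P, by simp [H]⟩
  · simpa only [Fintype.card_fin] using
      MonoidAlgebra.sum_sum_single_add_sum_single_of_card_prime (R := ℤ) H F hHinj
      (fun i h => hpq.ne' (by rw [← hFcard, h, hHcard])) (fun i => by rw [hHcard]; exact hp)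
      (by rw [hFcard]; exact hq) hcover
end

section
/- Let Q = (ℤ/p)² and let A be a ℤ-torsion-free ℤQ-module. If the fixed-point submodule A^K is finitely generated as an abelian group for every non-trivial subgroup K ≤ Q, then A is finitely generated as an abelian group. -/
/-- The fixed-point subgroup `A^K` of the action of a subgroup `K ≤ Q` on `A`. -/
def fixedAddSubgroup (Q : Type*) [Group Q] (A : Type*) [AddCommGroup A]
    [DistribMulAction Q A] (K : Subgroup Q) : AddSubgroup A where
  carrier := {a : A | ∀ k ∈ K, k • a = a}
  zero_mem' := by intro k _; simp
  add_mem' := by intro a b ha hb k hk; rw [smul_add, ha k hk, hb k hk]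
  neg_mem' := by intro a ha k hk; rw [smul_neg, ha k hk]

/-! Let `M ≤ A` be the subgroup generated by the `A^K`, `K ≠ 1`; it is finitely generated.
In a group of exponent `p`, summing the norm elements of the cyclic subgroups `⟨g⟩`, `g ≠ 1`,
gives `(p - 1) • Q̂ + (|Q| - p) • 1` (each subgroup of order `p` is counted `p - 1` times in
`∑ Ê_i = Q̂ + p`), so `(|Q| - p) • A ⊆ M`. For `Q = (ℤ/p)²` this multiplier is `p² - p > 0`, and as
`A` is torsion-free, multiplication by it embeds `A` into `M`. -/

open Finset Subgroup

section NormElements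

variable {Q : Type*} [Group Q] [Fintype Q] {A : Type*} [AddCommGroup A] [DistribMulAction Q A]

open scoped Classical in
theorem sum_smul_mem_fixedAddSubgroup (K : Subgroup Q) (a : A) :
    ∑ k ∈ univ.filter (· ∈ K), k • a ∈ fixedAddSubgroup Q A K := by
  intro h hh
  rw [smul_sum]
  refine sum_equiv (Equiv.mulLeft h) (fun k => ?_) (fun k _ => smul_smul h k a)
  simp [mul_mem_cancel_left hh]

variable {p : ℕ} [Fact p.Prime]

theorem mem_zpowers_comm_of_pow_eq_one (hexp : ∀ g : Q, g ^ p = 1) {g k : Q} (hg : g ≠ 1)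
    (hk : k ≠ 1) (h : k ∈ zpowers g) : g ∈ zpowers k := by
  have hcard : ∀ x : Q, x ≠ 1 → Nat.card (zpowers x) = p := fun x hx =>
    (Nat.card_zpowers x).trans (orderOf_eq_prime (hexp x) hx)
  rw [eq_of_le_of_card_ge (zpowers_le.mpr h) (by rw [hcard g hg, hcard k hk])]
  exact mem_zpowers g

open scoped Classical in
theorem card_filter_mem_zpowers (hexp : ∀ g : Q, g ^ p = 1) (k : Q) :
    #{g ∈ univ.erase (1 : Q) | k ∈ zpowers g} = if k = 1 then Fintype.card Q - 1 else p - 1 := by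
  split_ifs with hk
  · subst hk
    simp [card_erase_of_mem]
  · have : {g ∈ univ.erase (1 : Q) | k ∈ zpowers g} = (univ.filter (· ∈ zpowers k)).erase 1 := by
      ext g
      simp only [mem_filter, mem_erase, mem_univ, and_true, true_and]
      exact and_congr_right fun hg =>
        ⟨mem_zpowers_comm_of_pow_eq_one hexp hg hk, mem_zpowers_comm_of_pow_eq_one hexp hk hg⟩
    rw [this, card_erase_of_mem (by simp [one_mem]), ← Fintype.card_subtype,
      ← Nat.card_eq_fintype_card, Nat.card_zpowers, orderOf_eq_prime (hexp k) hk]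

open scoped Classical in
theorem sum_erase_one_sum_zpowers_smul (hexp : ∀ g : Q, g ^ p = 1) (hpQ : p ≤ Fintype.card Q) (a : A) :
    ∑ g ∈ univ.erase (1 : Q), ∑ k ∈ univ.filter (· ∈ zpowers g), k • a
      = (p - 1) • ∑ k : Q, k • a + (Fintype.card Q - p) • a := by
  have hp := (Fact.out : p.Prime).one_lt
  calc ∑ g ∈ univ.erase (1 : Q), ∑ k ∈ univ.filter (· ∈ zpowers g), k • a
      = ∑ k : Q, ∑ g ∈ univ.erase (1 : Q), if k ∈ zpowers g then k • a else 0 := by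
        simp_rw [sum_filter]; exact sum_comm
    _ = ∑ k : Q, #{g ∈ univ.erase (1 : Q) | k ∈ zpowers g} • k • a := by
        simp_rw [← sum_filter, sum_const]
    _ = ∑ k : Q, ((p - 1) • k • a + if k = 1 then (Fintype.card Q - p) • k • a else 0) := by
        refine sum_congr rfl fun k _ => ?_
        rw [card_filter_mem_zpowers hexp]
        split_ifs with hk
        · rw [← add_nsmul]; congr 1; omega
        · rw [add_zero]
    _ = (p - 1) • ∑ k : Q, k • a + (Fintype.card Q - p) • a := by
        rw [sum_add_distrib, sum_ite_eq', smul_sum, if_pos (mem_univ 1), one_smul]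

end NormElements

theorem AddGroup.fg_of_nsmul_mem {A : Type*} [AddCommGroup A] {n : ℕ}
    (hn : Function.Injective (n • · : A → A)) {M : AddSubgroup A} (hM : M.FG)
    (h : ∀ a, n • a ∈ M) : AddGroup.FG A := by
  have : Module.Finite ℤ M :=
    Module.Finite.iff_addGroup_fg.mpr (AddGroup.fg_iff_addSubgroup_fg M |>.mpr hM)
  let φ : A →+ M := (nsmulAddMonoidHom n).codRestrict M h
  have : Module.Finite ℤ A := Module.Finite.of_injective φ.toIntLinearMap fun x y hxy =>
    hn (congrArg Subtype.val hxy)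
  exact Module.Finite.iff_addGroup_fg.mp this

theorem AddGroup.fg_of_fg_fixedAddSubgroup {Q : Type*} [Group Q] [Fintype Q] {p : ℕ}
    [Fact p.Prime] (hexp : ∀ g : Q, g ^ p = 1) (hpQ : p < Fintype.card Q) {A : Type*}
    [AddCommGroup A] [DistribMulAction Q A]
    (htf : ∀ (a : A) (n : ℕ), 0 < n → n • a = 0 → a = 0)
    (hfix : ∀ K : Subgroup Q, K ≠ ⊥ → (fixedAddSubgroup Q A K).FG) : AddGroup.FG A := by
  classical
  let M := ⨆ K : {K : Subgroup Q // K ≠ ⊥}, fixedAddSubgroup Q A K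
  have hM : ∀ K : Subgroup Q, K ≠ ⊥ → fixedAddSubgroup Q A K ≤ M := fun K hK =>
    le_iSup (fun K : {K : Subgroup Q // K ≠ ⊥} => fixedAddSubgroup Q A K) ⟨K, hK⟩
  have : Nontrivial Q := Fintype.one_lt_card_iff_nontrivial.mp (by
    have := (Fact.out : p.Prime).one_lt; omega)
  have hnsmul : ∀ a : A, (Fintype.card Q - p) • a ∈ M := by
    intro a
    rw [eq_sub_of_add_eq' (sum_erase_one_sum_zpowers_smul (A := A) hexp hpQ.le a).symm]
    refine sub_mem (sum_mem fun g hg => hM _ ?_ (sum_smul_mem_fixedAddSubgroup _ a))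
      (nsmul_mem (hM ⊤ bot_ne_top.symm (by simpa using sum_smul_mem_fixedAddSubgroup ⊤ a)) _)
    simpa using hg
  have hMfg : M.FG := AddSubgroup.FG.iSup _ fun K => hfix K.1 K.2
  refine AddGroup.fg_of_nsmul_mem (fun x y hxy => ?_) hMfg hnsmul
  exact sub_eq_zero.mp (htf _ _ (Nat.sub_pos_of_lt hpQ) (by rw [smul_sub, sub_eq_zero]; exact hxy))

/-- if `Q = (ℤ/p)²` acts on a `ℤ`-torsion-free `ℤQ`-module `A` with `A^K`
finitely generated for every non-trivial subgroup `K ≤ Q`, then `A` is finitely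
generated as an abelian group. -/
theorem stmt_2 {p : ℕ} (hp : p.Prime) (A : Type) [AddCommGroup A]
    [DistribMulAction (Multiplicative (ZMod p × ZMod p)) A]
    (htf : ∀ (a : A) (n : ℕ), 0 < n → n • a = 0 → a = 0)
    (hfix : ∀ K : Subgroup (Multiplicative (ZMod p × ZMod p)), K ≠ ⊥ →
      (fixedAddSubgroup (Multiplicative (ZMod p × ZMod p)) A K).FG) :
    AddGroup.FG A := by
  have : Fact p.Prime := ⟨hp⟩
  refine AddGroup.fg_of_fg_fixedAddSubgroup (p := p) (fun g => ?_) ?_ htf hfix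
  · rw [← ofAdd_toAdd g, ← ofAdd_nsmul, ofAdd_eq_one]
    ext <;> simp
  · simp only [Fintype.card_multiplicative, Fintype.card_prod, ZMod.card]
    nlinarith [hp.one_lt]
end

section
/- Let Q be a non-abelian group of order pq with p < q prime, and let A be a ℤ-torsion-free ℤQ-module. If A^K is finitely generated as an abelian group for every non-trivial subgroup K ≤ Q, then A is finitely generated as an abelian group. -/
/-!
The proper non-trivial subgroups of a non-cyclic group `Q` of order `pq` have prime order, so
each element `g ≠ 1` lies in exactly one of them, namely `⟨g⟩`. Counting how often each element
of `Q` occurs gives, for the norm elements `N_K = ∑_{k ∈ K} k` in `ℤQ` and the set `S` of these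
subgroups, `∑_{K ∈ S} N_K = N_Q + (|S| - 1)`, with `|S| ≥ 2`. Hence `(|S| - 1) • A` lies in the
finitely generated group `∑_{K ≠ 1} A^K`, and `A ≅ (|S| - 1) • A` since `A` is torsion-free.
-/

open Finset

section Partition

variable {Q : Type*} [Group Q]

theorem Subgroup.one_lt_card_of_cover [Nontrivial Q] (S : Finset (Subgroup Q))
    (hcover : ∀ g ≠ (1 : Q), ∃ K ∈ S, g ∈ K) (hproper : ∀ K ∈ S, K ≠ ⊤) : 1 < #S := by
  obtain ⟨g, hg⟩ := exists_ne (1 : Q)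
  obtain ⟨K₀, hK₀, -⟩ := hcover g hg
  by_contra! hS
  refine hproper K₀ hK₀ (eq_top_iff' K₀ |>.mpr fun x => ?_)
  by_cases hx : x = 1
  · exact hx ▸ K₀.one_mem
  · obtain ⟨K, hK, hxK⟩ := hcover x hx
    exact card_le_one.mp hS K hK K₀ hK₀ ▸ hxK

open scoped Classical in
theorem Subgroup.sum_sum_add_eq_of_partition [Fintype Q] {M : Type*} [AddCommMonoid M]
    (f : Q → M) (S : Finset (Subgroup Q)) (hS : ∀ g ≠ (1 : Q), ∃! K, K ∈ S ∧ g ∈ K) :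
    ∑ K ∈ S, ∑ g : K, f g + f 1 = ∑ g, f g + #S • f 1 := by
  have hswap : ∑ K ∈ S, ∑ g : K, f g = ∑ g, #{K ∈ S | g ∈ K} • f g := by
    simp_rw [card_eq_sum_ones, sum_smul, one_smul, sum_filter]
    rw [sum_comm]
    exact sum_congr rfl fun K _ =>
      (sum_subtype (univ.filter (· ∈ K)) (by simp) f).symm.trans (sum_filter _ _)
  have hone : {K ∈ S | (1 : Q) ∈ K} = S := filter_true_of_mem fun K _ => K.one_mem
  have hrest : ∑ g ∈ univ.erase 1, #{K ∈ S | g ∈ K} • f g = ∑ g ∈ univ.erase 1, f g := by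
    refine sum_congr rfl fun g hg => ?_
    have : #{K ∈ S | g ∈ K} = 1 := by
      simpa [card_eq_one_iff_existsUnique] using hS g (ne_of_mem_erase hg)
    rw [this, one_smul]
  rw [hswap, ← add_sum_erase univ _ (mem_univ 1), ← add_sum_erase univ f (mem_univ 1), hone, hrest]
  abel

end Partition

section ProperSubgroups

variable {Q : Type*} [Group Q]

theorem Subgroup.eq_zpowers_of_prime_card {K : Subgroup Q} (hK : (Nat.card K).Prime) {g : Q}
    (hgK : g ∈ K) (hg : g ≠ 1) : K = zpowers g := by
  have hle : zpowers g ≤ K := zpowers_le.mpr hgK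
  have : Finite K := Nat.finite_of_card_ne_zero hK.ne_zero
  refine (eq_of_le_of_card_ge hle (le_of_eq ?_)).symm
  refine (((Nat.dvd_prime hK).mp (card_dvd_of_le hle)).resolve_left ?_).symm
  rwa [Nat.card_zpowers, orderOf_eq_one_iff]

theorem Subgroup.prime_card_of_card_eq_mul {p q : ℕ} (hp : p.Prime) (hq : q.Prime)
    (hQ : Nat.card Q = p * q) {K : Subgroup Q} (hbot : K ≠ ⊥) (htop : K ≠ ⊤) :
    (Nat.card K).Prime := by
  have : Finite Q := Nat.finite_of_card_ne_zero (hQ ▸ (mul_pos hp.pos hq.pos).ne')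
  obtain ⟨a, b, ha, hb, hab⟩ := Nat.dvd_mul.mp (hQ ▸ K.card_subgroup_dvd_card)
  rcases (Nat.dvd_prime hp).mp ha with rfl | rfl <;>
    rcases (Nat.dvd_prime hq).mp hb with rfl | rfl
  · exact absurd (card_eq_one.mp (by simpa using hab.symm)) hbot
  · simpa [← hab] using hq
  · simpa [← hab] using hp
  · exact absurd (K.eq_top_of_card_eq (hab.symm.trans hQ.symm)) htop

theorem Subgroup.existsUnique_ne_bot_ne_top_mem {p q : ℕ} (hp : p.Prime) (hq : q.Prime)
    (hQ : Nat.card Q = p * q) (hcyc : ¬ IsCyclic Q) {g : Q} (hg : g ≠ 1) :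
    ∃! K : Subgroup Q, (K ≠ ⊥ ∧ K ≠ ⊤) ∧ g ∈ K := by
  refine ⟨zpowers g, ⟨⟨?_, ?_⟩, mem_zpowers g⟩, ?_⟩
  · rwa [Ne, zpowers_eq_bot]
  · exact fun h => hcyc ⟨g, fun x => mem_zpowers_iff.mp (h ▸ mem_top x)⟩
  · rintro K ⟨⟨hbot, htop⟩, hgK⟩
    exact eq_zpowers_of_prime_card (prime_card_of_card_eq_mul hp hq hQ hbot htop) hgK hg

end ProperSubgroups

section Norm

variable {Q : Type*} [Group Q] [Fintype Q] {A : Type*} [AddCommGroup A] [DistribMulAction Q A]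

open scoped Classical in
noncomputable def subgroupNorm (K : Subgroup Q) (a : A) : A := ∑ k : K, (k : Q) • a

theorem subgroupNorm_mem_fixedAddSubgroup (K : Subgroup Q) (a : A) :
    subgroupNorm K a ∈ fixedAddSubgroup Q A K := fun k hk => by
  classical
  simp only [subgroupNorm, smul_sum, smul_smul]
  exact Fintype.sum_equiv (Equiv.mulLeft (⟨k, hk⟩ : K)) _ _ fun _ => rfl

theorem subgroupNorm_top (a : A) : subgroupNorm (⊤ : Subgroup Q) a = ∑ g : Q, g • a := by
  classical exact Fintype.sum_equiv Subgroup.topEquiv.toEquiv _ _ fun _ => rfl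

theorem sum_subgroupNorm_add_eq_of_partition (S : Finset (Subgroup Q))
    (hS : ∀ g ≠ (1 : Q), ∃! K, K ∈ S ∧ g ∈ K) (a : A) :
    ∑ K ∈ S, subgroupNorm K a + a = subgroupNorm (⊤ : Subgroup Q) a + #S • a := by
  rw [subgroupNorm_top]
  simpa only [one_smul, subgroupNorm] using Subgroup.sum_sum_add_eq_of_partition (· • a) S hS

theorem card_nsmul_sub_mem_iSup_fixedAddSubgroup [Nontrivial Q] (S : Finset (Subgroup Q))
    (hS : ∀ g ≠ (1 : Q), ∃! K, K ∈ S ∧ g ∈ K) (hbot : ∀ K ∈ S, K ≠ ⊥) (a : A) :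
    #S • a - a ∈ ⨆ K : {K : Subgroup Q // K ≠ ⊥}, fixedAddSubgroup Q A K := by
  have hsum : #S • a - a = ∑ K ∈ S, subgroupNorm K a - subgroupNorm (⊤ : Subgroup Q) a := by
    rw [sub_eq_sub_iff_add_eq_add, sum_subgroupNorm_add_eq_of_partition S hS a, add_comm]
  rw [hsum]
  refine sub_mem (sum_mem fun K hK => ?_) ?_
  · exact AddSubgroup.mem_iSup_of_mem ⟨K, hbot K hK⟩ (subgroupNorm_mem_fixedAddSubgroup K a)
  · exact AddSubgroup.mem_iSup_of_mem ⟨⊤, top_ne_bot⟩ (subgroupNorm_mem_fixedAddSubgroup ⊤ a)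

end Norm

theorem AddGroup.fg_of_nsmul_injective_of_nsmul_mem {A : Type*} [AddCommGroup A] {n : ℕ}
    (hn : Function.Injective (n • · : A → A)) {B : AddSubgroup A} (hB : B.FG)
    (hnB : ∀ a, n • a ∈ B) : AddGroup.FG A := by
  have : Module.Finite ℤ B.toIntSubmodule :=
    Module.Finite.iff_fg.mpr ((Submodule.fg_iff_addSubgroup_fg _).mpr hB)
  let f : A →ₗ[ℤ] B.toIntSubmodule := LinearMap.codRestrict _ ((n : ℤ) • LinearMap.id) fun a => by
    simp only [LinearMap.smul_apply, LinearMap.id_apply, natCast_zsmul]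
    exact hnB a
  refine Module.Finite.iff_addGroup_fg.mp (Module.Finite.of_injective f fun a b h => hn ?_)
  simpa [f] using congrArg Subtype.val h

theorem stmt_3_general {p q : ℕ} (hp : p.Prime) (hq : q.Prime)
    (Q : Type) [Group Q] [Fintype Q] (hQ : Fintype.card Q = p * q)
    (hna : ¬ ∀ a b : Q, a * b = b * a)
    (A : Type) [AddCommGroup A] [DistribMulAction Q A]
    (htf : ∀ (a : A) (n : ℕ), 0 < n → n • a = 0 → a = 0)
    (hfix : ∀ K : Subgroup Q, K ≠ ⊥ → (fixedAddSubgroup Q A K).FG) :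
    AddGroup.FG A := by
  have hcyc : ¬ IsCyclic Q := fun _ => hna IsCyclic.commGroup.mul_comm
  have : Nontrivial Q := Nontrivial.of_not_isCyclic hcyc
  let S : Finset (Subgroup Q) := (Set.toFinite {K : Subgroup Q | K ≠ ⊥ ∧ K ≠ ⊤}).toFinset
  have hS : ∀ g ≠ (1 : Q), ∃! K, K ∈ S ∧ g ∈ K := by
    simpa [S] using fun g => Subgroup.existsUnique_ne_bot_ne_top_mem hp hq
      (Nat.card_eq_fintype_card.trans hQ) hcyc (g := g)
  have hS1 : 1 < #S := Subgroup.one_lt_card_of_cover S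
    (fun g hg => (hS g hg).exists.imp fun _ => And.imp_left id) (by simp [S])
  refine AddGroup.fg_of_nsmul_injective_of_nsmul_mem (n := #S - 1) (fun a b hab => ?_)
    (AddSubgroup.FG.iSup (fun K : {K : Subgroup Q // K ≠ ⊥} => fixedAddSubgroup Q A K)
      fun K => hfix K K.2) fun a => ?_
  · exact sub_eq_zero.mp (htf _ _ (Nat.sub_pos_of_lt hS1) (by simp only [nsmul_sub, hab, sub_self]))
  · rw [sub_nsmul a hS1.le, one_nsmul, ← sub_eq_add_neg]
    exact card_nsmul_sub_mem_iSup_fixedAddSubgroup S hS (by simp +contextual [S]) a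

/-- if a non-abelian group `Q` of order `pq` (`p < q` primes) acts on a
`ℤ`-torsion-free `ℤQ`-module `A` with `A^K` finitely generated for every non-trivial
subgroup `K ≤ Q`, then `A` is finitely generated as an abelian group. -/
theorem stmt_3 {p q : ℕ} (hp : p.Prime) (hq : q.Prime) (hpq : p < q)
    (Q : Type) [Group Q] [Fintype Q] (hQ : Fintype.card Q = p * q)
    (hna : ¬ ∀ a b : Q, a * b = b * a)
    (A : Type) [AddCommGroup A] [DistribMulAction Q A]
    (htf : ∀ (a : A) (n : ℕ), 0 < n → n • a = 0 → a = 0)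
    (hfix : ∀ K : Subgroup Q, K ≠ ⊥ → (fixedAddSubgroup Q A K).FG) :
    AddGroup.FG A :=
  stmt_3_general hp hq Q hQ hna A htf hfix
end

section
/- The class of upper-finite groups is closed under extensions: if N is a normal subgroup of G such that both N and G/N are upper-finite, then G is upper-finite. -/
/-!
Let `f : G → H` be a surjection onto a finitely generated group and `M = f(N)`. Then `H/M` is a
finitely generated quotient of `G/N`, hence finite; so `M` has finite index in `H` and is finitely
generated by Schreier's lemma. As a quotient of `N`, the group `M` is then finite, and so is `H`.
-/

/-- A group is upper-finite if every finitely generated quotient of it is finite. -/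
def UpperFinite (G : Type*) [Group G] : Prop :=
  ∀ (N : Subgroup G) [N.Normal], Group.FG (G ⧸ N) → Finite (G ⧸ N)

theorem UpperFinite.finite_of_surjective {G H : Type*} [Group G] [Group H] (hG : UpperFinite G)
    [Group.FG H] (f : G →* H) (hf : Function.Surjective f) : Finite H := by
  let e : G ⧸ f.ker ≃* H := QuotientGroup.quotientKerEquivOfSurjective f hf
  have : Finite (G ⧸ f.ker) :=
    hG f.ker (Group.fg_of_surjective (f := e.symm.toMonoidHom) e.symm.surjective)
  exact Finite.of_equiv _ e.toEquiv

/-- the class of upper-finite groups is closed under extensions. -/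
theorem stmt_7 {G : Type} [Group G] (N : Subgroup G) [N.Normal]
    (hN : UpperFinite N) (hQ : UpperFinite (G ⧸ N)) : UpperFinite G := by
  intro K _ _
  let f : G →* G ⧸ K := QuotientGroup.mk' K
  have hf : Function.Surjective f := QuotientGroup.mk'_surjective K
  let M : Subgroup (G ⧸ K) := N.map f
  have : M.Normal := Subgroup.Normal.map inferInstance f hf
  have : Group.FG ((G ⧸ K) ⧸ M) := Group.fg_of_surjective (QuotientGroup.mk'_surjective M)
  have hNM : N ≤ M.comap f := N.le_comap_map f
  have : Finite ((G ⧸ K) ⧸ M) :=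
    hQ.finite_of_surjective (QuotientGroup.map N M f hNM)
      (QuotientGroup.map_surjective_of_surjective N M f
        ((QuotientGroup.mk'_surjective M).comp hf) hNM)
  have : M.FiniteIndex := Subgroup.finiteIndex_of_finite_quotient
  have : Finite M := hN.finite_of_surjective (f.subgroupMap N) (f.subgroupMap_surjective N)
  exact Finite.of_subgroup_quotient M
end

section
/- Let A and B be abelian groups. If A is upper-finite, then the tensor product A ⊗_ℤ B is upper-finite. -/
open scoped TensorProduct

/-- An abelian group is upper-finite if every finitely generated quotient of it is finite. -/
def AddUpperFinite (A : Type*) [AddCommGroup A] : Prop :=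
  ∀ N : AddSubgroup A, AddGroup.FG (A ⧸ N) → Finite (A ⧸ N)

/-
A ⊗ B is generated by the pure tensors a ⊗ b, and for fixed b the map a ↦ a ⊗ b is a homomorphism
out of A. In a finitely generated quotient Q of A ⊗ B the image of such a map is a subgroup of Q,
hence finitely generated (ℤ is noetherian), and a quotient of A, hence finite. So Q is generated by
elements of finite order; being abelian and finitely generated, it is finite.
-/

theorem AddSubgroup.fg_of_addGroupFG {Q : Type*} [AddCommGroup Q] [hQ : AddGroup.FG Q]
    (K : AddSubgroup Q) : AddGroup.FG K :=
  have : Module.Finite ℤ Q := Module.Finite.iff_addGroup_fg.mpr hQ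
  Module.Finite.iff_addGroup_fg.mp <|
    Module.Finite.iff_fg.mpr (IsNoetherian.noetherian (AddSubgroup.toIntSubmodule K))

theorem TensorProduct.isOfFinAddOrder_apply_of_tmul {R M N Q : Type*} [CommSemiring R]
    [AddCommMonoid M] [AddCommMonoid N] [Module R M] [Module R N] [AddCommMonoid Q]
    (f : M ⊗[R] N →+ Q) (hf : ∀ m n, IsOfFinAddOrder (f (m ⊗ₜ n))) (x : M ⊗[R] N) :
    IsOfFinAddOrder (f x) := by
  induction x using TensorProduct.induction_on with
  | zero => simp
  | tmul m n => exact hf m n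
  | add x y hx hy => simpa using hx.add hy

namespace AddUpperFinite

variable {A Q : Type*} [AddCommGroup A] [AddCommGroup Q]

theorem of_forall_isAddTorsion
    (h : ∀ N : AddSubgroup A, AddGroup.FG (A ⧸ N) → IsAddTorsion (A ⧸ N)) :
    AddUpperFinite A :=
  fun N hN => AddCommGroup.finite_of_fg_isAddTorsion _ (h N hN)

theorem finite_range [AddGroup.FG Q] (hA : AddUpperFinite A) (f : A →+ Q) : Finite f.range :=
  let e : A ⧸ f.ker ≃+ f.range := QuotientAddGroup.quotientKerEquivRange f
  have : AddGroup.FG (A ⧸ f.ker) :=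
    have := f.range.fg_of_addGroupFG
    AddGroup.fg_of_surjective (f := e.symm.toAddMonoidHom) e.symm.surjective
  have := hA f.ker this
  Finite.of_equiv _ e.toEquiv

theorem isOfFinAddOrder_apply [AddGroup.FG Q] (hA : AddUpperFinite A) (f : A →+ Q) (a : A) :
    IsOfFinAddOrder (f a) :=
  have := hA.finite_range f
  f.range.subtype.isOfFinAddOrder (isOfFinAddOrder_of_finite (f.rangeRestrict a))

end AddUpperFinite

/-- if `A` is an upper-finite abelian group, then `A ⊗ℤ B` is upper-finite. -/
theorem stmt_8 (A B : Type) [AddCommGroup A] [AddCommGroup B] (hA : AddUpperFinite A) :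
    AddUpperFinite (A ⊗[ℤ] B) := by
  refine AddUpperFinite.of_forall_isAddTorsion fun N hN q => ?_
  obtain ⟨x, rfl⟩ := QuotientAddGroup.mk'_surjective N q
  refine TensorProduct.isOfFinAddOrder_apply_of_tmul _ (fun a b => ?_) x
  exact hA.isOfFinAddOrder_apply
    ((QuotientAddGroup.mk' N).comp ((TensorProduct.mk ℤ A B).flip b).toAddMonoidHom) a
end

section
/- Let G be a nilpotent group. For each i ≥ 1 there is a surjective group homomorphism from the i-fold tensor power (G/G') ⊗ ⋯ ⊗ (G/G') (over ℤ) onto the lower central factor γ_i(G)/γ_{i+1}(G), induced by iterated commutators. -/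
/-!
Modulo `γ_{n+2}`, conjugation acts trivially on `γ_{n+1}`, so the commutator identities
`[ab, x] = a[b, x]a⁻¹ · [a, x]` and `[a, xy] = [a, x] · x[a, y]x⁻¹` make `(a, x) ↦ [a, x]` a
bilinear pairing `γ_n/γ_{n+1} × G/G' → γ_{n+1}/γ_{n+2}`. Iterating it, starting from
`G/G' = γ_1/γ_2`, gives a multilinear map on `(G/G')^i` whose image spans `γ_i/γ_{i+1}`, because
`γ_{n+1}` is generated by the commutators `[a, x]` with `a ∈ γ_n`; its lift to the tensor power
is therefore onto.
-/

open Subgroup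
open scoped commutatorElement

theorem PiTensorProduct.range_lift {ι R N : Type*} {M : ι → Type*} [CommSemiring R]
    [∀ i, AddCommMonoid (M i)] [∀ i, Module R (M i)] [AddCommMonoid N] [Module R N]
    (f : MultilinearMap R M N) :
    LinearMap.range (PiTensorProduct.lift f) = Submodule.span R (Set.range f) := by
  rw [← Submodule.map_top, ← PiTensorProduct.span_tprod_eq_top, Submodule.map_span,
    ← Set.range_comp]
  simp [Function.comp_def]

variable (G : Type*) [Group G]

local notation "L" => Subgroup.lowerCentralSeries (⊤ : Subgroup G)

/-- `LowerCentralFactor G n` is `γ_{n+1}(G)/γ_{n+2}(G)`: Mathlib's lower central series starts at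
`L 0 = G`. -/
abbrev LowerCentralFactor (n : ℕ) : Type _ :=
  L n ⧸ (L (n + 1)).subgroupOf (L n)

variable {G}

theorem commutatorElement_mem_lowerCentralSeries_succ {n : ℕ} {a : G} (ha : a ∈ L n) (x : G) :
    ⁅a, x⁆ ∈ L (n + 1) :=
  Subgroup.lowerCentralSeries_isDescendingCentralSeries.2 a n ha x

namespace LowerCentralFactor

theorem mk_conj {n : ℕ} {c : G} (hc : c ∈ L n) (g : G) :
    (QuotientGroup.mk ⟨g * c * g⁻¹, Normal.conj_mem inferInstance c hc g⟩ :
      LowerCentralFactor G n) = QuotientGroup.mk ⟨c, hc⟩ := by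
  rw [QuotientGroup.eq, mem_subgroupOf]
  convert inv_mem (commutatorElement_mem_lowerCentralSeries_succ (inv_mem hc) g) using 1
  simp only [coe_mul, coe_inv, commutatorElement_def]
  group

instance (n : ℕ) : CommGroup (LowerCentralFactor G n) where
  mul_comm p q := by
    induction p using QuotientGroup.induction_on with | H a => ?_
    induction q using QuotientGroup.induction_on with | H b => ?_
    rw [← QuotientGroup.mk_mul, ← QuotientGroup.mk_mul, ← mk_conj (b * a).2 a]
    congr 1
    ext
    simp [mul_assoc]

def commutatorClass {n : ℕ} (a : L n) (x : G) : LowerCentralFactor G (n + 1) :=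
  QuotientGroup.mk ⟨⁅(a : G), x⁆, commutatorElement_mem_lowerCentralSeries_succ a.2 x⟩

theorem commutatorClass_mul_right {n : ℕ} (a : L n) (x y : G) :
    commutatorClass a (x * y) = commutatorClass a x * commutatorClass a y := by
  rw [commutatorClass, commutatorClass, commutatorClass,
    ← mk_conj (commutatorElement_mem_lowerCentralSeries_succ a.2 y) x, ← QuotientGroup.mk_mul]
  congr 1
  ext
  simp only [coe_mul, commutatorElement_mul_right_eq_mul_conj, mul_assoc]

theorem commutatorClass_mul_left {n : ℕ} (a b : L n) (x : G) :
    commutatorClass (a * b) x = commutatorClass a x * commutatorClass b x := by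
  rw [mul_comm, commutatorClass, commutatorClass, commutatorClass,
    ← mk_conj (commutatorElement_mem_lowerCentralSeries_succ b.2 x) a, ← QuotientGroup.mk_mul]
  congr 1
  ext
  exact commutatorElement_mul_left_eq_conj_mul _ _ _

theorem commutatorClass_eq_one {n : ℕ} (a : L n) (ha : (a : G) ∈ L (n + 1)) (x : G) :
    commutatorClass a x = 1 := by
  rw [commutatorClass, QuotientGroup.eq_one_iff, mem_subgroupOf]
  exact commutatorElement_mem_lowerCentralSeries_succ ha x

theorem closure_range_commutatorClass (n : ℕ) :
    closure (Set.range fun p : L n × G => commutatorClass p.1 p.2) = ⊤ := by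
  set S := closure (Set.range fun p : L n × G => commutatorClass p.1 p.2)
  -- The elements of `L (n + 1)` whose class lies in `S` form a subgroup containing `⁅L n, ⊤⁆`.
  have hle : L (n + 1) ≤ (S.comap (QuotientGroup.mk' _)).map (L (n + 1)).subtype := by
    refine commutator_le.mpr ?_
    rintro a ha x -
    exact ⟨_, subset_closure ⟨(⟨a, ha⟩, x), rfl⟩, rfl⟩
  rw [eq_top_iff]
  rintro ⟨a⟩ -
  obtain ⟨b, hb, hba⟩ := hle a.2
  rwa [Subtype.ext hba] at hb

variable (G) in
def commutatorPairing (n : ℕ) :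
    LowerCentralFactor G n →* Abelianization G →* LowerCentralFactor G (n + 1) :=
  QuotientGroup.lift _
    { toFun a :=
        Abelianization.lift (MonoidHom.mk' (commutatorClass a) (commutatorClass_mul_right a))
      map_one' := by
        ext x
        exact commutatorClass_eq_one 1 (one_mem _) x
      map_mul' a b := by
        ext x
        exact commutatorClass_mul_left a b x }
    (fun a ha => by
      ext x
      exact commutatorClass_eq_one a (mem_subgroupOf.mp ha) x)

variable (G) in
def commutatorPairingₗ (n : ℕ) :
    Additive (LowerCentralFactor G n) →ₗ[ℤ] Additive (Abelianization G) →ₗ[ℤ]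
      Additive (LowerCentralFactor G (n + 1)) :=
  LinearMap.mk₂ ℤ (fun q x => .ofMul (commutatorPairing G n q.toMul x.toMul))
    (by simp) (by simp) (by simp) (by simp)

theorem eq_top_of_forall_commutatorPairingₗ_mem {n : ℕ}
    {S : Submodule ℤ (Additive (LowerCentralFactor G (n + 1)))}
    (hS : ∀ q x, commutatorPairingₗ G n q x ∈ S) : S = ⊤ := by
  have hle : closure (Set.range fun p : L n × G => commutatorClass p.1 p.2) ≤
      S.toAddSubgroup.toSubgroup' := by
    rw [Subgroup.closure_le]
    rintro _ ⟨⟨a, x⟩, rfl⟩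
    exact hS (.ofMul a) (.ofMul (Abelianization.of x))
  rw [closure_range_commutatorClass] at hle
  exact eq_top_iff.mpr fun q _ => hle (mem_top q.toMul)

variable (G) in
def ofAbelianization : Abelianization G →* LowerCentralFactor G 0 :=
  Abelianization.lift ((QuotientGroup.mk' _).comp (topEquiv (G := G)).symm.toMonoidHom)

theorem ofAbelianization_surjective : Function.Surjective (ofAbelianization G) := by
  rintro ⟨a⟩
  exact ⟨Abelianization.of a, rfl⟩

end LowerCentralFactor

open LowerCentralFactor

variable (G) in
def iteratedCommutator : (k : ℕ) →
    MultilinearMap ℤ (fun _ : Fin (k + 1) => Additive (Abelianization G))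
      (Additive (LowerCentralFactor G k))
  | 0 => MultilinearMap.ofSubsingleton (ι := Fin 1) ℤ _ _ 0
      (ofAbelianization G).toAdditive.toIntLinearMap
  | k + 1 => ((commutatorPairingₗ G k).compMultilinearMap (iteratedCommutator k)).uncurryRight

theorem iteratedCommutator_snoc (k : ℕ) (v : Fin (k + 1) → Additive (Abelianization G))
    (x : Additive (Abelianization G)) :
    iteratedCommutator G (k + 1) (Fin.snoc v x) =
      commutatorPairingₗ G k (iteratedCommutator G k v) x := by
  simp [iteratedCommutator]

theorem span_range_iteratedCommutator :
    ∀ k, Submodule.span ℤ (Set.range (iteratedCommutator G k)) = ⊤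
  | 0 => by
    refine eq_top_iff.mpr fun q _ => ?_
    obtain ⟨x, hx⟩ := ofAbelianization_surjective q.toMul
    exact Submodule.subset_span ⟨fun _ => .ofMul x, hx⟩
  | k + 1 => by
    refine eq_top_of_forall_commutatorPairingₗ_mem fun q x => ?_
    have hle : Submodule.span ℤ (Set.range (iteratedCommutator G k)) ≤
        (Submodule.span ℤ (Set.range (iteratedCommutator G (k + 1)))).comap
          ((commutatorPairingₗ G k).flip x) := by
      rw [Submodule.span_le]
      rintro _ ⟨v, rfl⟩
      exact Submodule.subset_span ⟨Fin.snoc v x, iteratedCommutator_snoc k v x⟩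
    rw [span_range_iteratedCommutator k] at hle
    exact hle Submodule.mem_top

theorem stmt_10_general (G : Type) [Group G] (i : ℕ) (hi : 1 ≤ i) :
    ∃ φ : TensorPower ℤ i (Additive (Abelianization G)) →+
      Additive (↥((⊤ : Subgroup G).lowerCentralSeries (i - 1)) ⧸
        ((⊤ : Subgroup G).lowerCentralSeries i).subgroupOf ((⊤ : Subgroup G).lowerCentralSeries (i - 1))),
      Function.Surjective φ := by
  obtain ⟨k, rfl⟩ := Nat.exists_eq_add_of_le' hi
  have hsurj : Function.Surjective (PiTensorProduct.lift (iteratedCommutator G k)) :=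
    LinearMap.range_eq_top.mp
      ((PiTensorProduct.range_lift _).trans (span_range_iteratedCommutator k))
  exact ⟨(PiTensorProduct.lift (iteratedCommutator G k)).toAddMonoidHom, hsurj⟩

/-- for a nilpotent group `G` and `i ≥ 1` there is a surjective homomorphism
from the `i`-fold tensor power of `G/G'` onto `γ_i(G)/γ_{i+1}(G)`.
(Here `γ_i(G) = lowerCentralSeries G (i-1)`, matching the paper's indexing `γ_1(G) = G`.) -/
theorem stmt_10 (G : Type) [Group G] (hG : Group.IsNilpotent G) (i : ℕ) (hi : 1 ≤ i) :
    ∃ φ : TensorPower ℤ i (Additive (Abelianization G)) →+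
      Additive (↥((⊤ : Subgroup G).lowerCentralSeries (i - 1)) ⧸
        ((⊤ : Subgroup G).lowerCentralSeries i).subgroupOf ((⊤ : Subgroup G).lowerCentralSeries (i - 1))),
      Function.Surjective φ :=
  stmt_10_general G i hi
end

section
/- Let G be an upper-finite nilpotent group. Then its derived subgroup G' is also upper-finite. -/
open scoped commutatorElement

theorem Function.Surjective.subsingleton_monoidHom {G H M : Type*} [MulOneClass G]
    [MulOneClass H] [MulOneClass M] {f : G →* H} (hf : Function.Surjective f)
    [Subsingleton (G →* M)] : Subsingleton (H →* M) :=
  ⟨fun _ _ => (MonoidHom.cancel_right hf).mp (Subsingleton.elim _ _)⟩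

instance Group.fg_of_isCyclic {H : Type*} [Group H] [IsCyclic H] : Group.FG H := by
  obtain ⟨g, hg⟩ := isCyclic_iff_exists_zpowers_eq_top.mp ‹_›
  exact ⟨⟨{g}, by rw [Finset.coe_singleton, ← Subgroup.zpowers_eq_closure, hg]⟩⟩

section UpperFinite

variable {G H : Type*} [Group G] [Group H]

theorem UpperFinite.finite_range (hG : UpperFinite G) (f : G →* H) [Group.FG f.range] :
    Finite f.range := by
  let e := QuotientGroup.quotientKerEquivRange f
  have : Group.FG (G ⧸ f.ker) := Group.fg_of_surjective (f := e.symm.toMonoidHom) e.symm.surjective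
  have : Finite (G ⧸ f.ker) := hG f.ker this
  exact Finite.of_equiv _ e.toEquiv

theorem UpperFinite.subsingleton_monoidHom (hG : UpperFinite G) [IsCyclic H]
    [IsMulTorsionFree H] : Subsingleton (G →* H) := by
  refine subsingleton_of_forall_eq 1 fun f => MonoidHom.ext fun x => ?_
  have := hG.finite_range f
  exact congrArg Subtype.val (isOfFinOrder_of_finite (⟨f x, x, rfl⟩ : f.range)).eq_one'

end UpperFinite

open scoped IsMulCommutative in
theorem finite_of_isMulCommutative_of_subsingleton_monoidHom_int {A : Type*} [Group A]
    [IsMulCommutative A] [Group.FG A] [Subsingleton (A →* Multiplicative ℤ)] : Finite A := by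
  classical
  obtain ⟨ι, j, _, _, p, hp, e, ⟨φ⟩⟩ := CommGroup.equiv_free_prod_prod_multiplicative_zmod A
  cases isEmpty_or_nonempty j with
  | inl _ =>
    have : ∀ i, NeZero (p i ^ e i) := fun i => ⟨pow_ne_zero _ (hp i).ne_zero⟩
    exact Finite.of_equiv _ φ.symm.toEquiv
  | inr hj =>
    obtain ⟨j₀⟩ := hj
    let π : A →* Multiplicative ℤ :=
      (Pi.evalMonoidHom _ j₀).comp ((MonoidHom.fst _ _).comp φ.toMonoidHom)
    obtain ⟨a, ha⟩ : ∃ a, π a = Multiplicative.ofAdd 1 :=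
      ⟨φ.symm (Pi.mulSingle j₀ (Multiplicative.ofAdd 1), 1), by simp [π]⟩
    rw [Subsingleton.elim π 1] at ha
    exact absurd (congrArg Multiplicative.toAdd ha) (by simp)

section LowerCentralSeries

variable {G A : Type*} [Group G] [CommGroup A]

theorem MonoidHom.map_conjNormal_of_commutator_le_ker {K : Subgroup G} [K.Normal] (f : K →* A)
    (hf : (⁅K, ⊤⁆ : Subgroup G).subgroupOf K ≤ f.ker) (g : G) (k : K) :
    f (MulAut.conjNormal g k) = f k := by
  have hc : ⁅g, (k : G)⁆ ∈ K := by
    rw [commutatorElement_def]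
    exact K.mul_mem (‹K.Normal›.conj_mem _ k.2 g) (K.inv_mem k.2)
  have hck : MulAut.conjNormal g k = ⟨⁅g, (k : G)⁆, hc⟩ * k :=
    Subtype.ext (by simp [commutatorElement_def])
  have hker : (⟨⁅g, (k : G)⁆, hc⟩ : K) ∈ f.ker :=
    hf (Subgroup.commutator_comm K ⊤ ▸ Subgroup.commutator_mem_commutator (Subgroup.mem_top g) k.2)
  rw [hck, map_mul, hker, one_mul]

theorem MonoidHom.apply_commutator_eq_one [Subsingleton (G →* A)] {K : Subgroup G} [K.Normal]
    (f : K →* A) (hf : ∀ g k, f (MulAut.conjNormal g k) = f k) {x : G} (hx : ∀ g, ⁅x, g⁆ ∈ K)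
    (g : G) : f ⟨⁅x, g⁆, hx g⟩ = 1 := by
  let F : G →* A :=
    { toFun g := f ⟨⁅x, g⁆, hx g⟩
      map_one' := by rw [← map_one f]; congr; simp
      map_mul' g₁ g₂ := by
        have : (⟨⁅x, g₁ * g₂⁆, hx _⟩ : K) =
            ⟨⁅x, g₁⁆, hx g₁⟩ * MulAut.conjNormal g₁ ⟨⁅x, g₂⁆, hx g₂⟩ :=
          Subtype.ext (by simp [commutatorElement_def]; group)
        simp only [this, map_mul, hf] }
  exact DFunLike.congr_fun (Subsingleton.elim F 1) g

theorem MonoidHom.eq_one_of_commutator_le_ker [Subsingleton (G →* A)] {H K : Subgroup G}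
    [K.Normal] (hK : ⁅H, ⊤⁆ = K) (f : K →* A)
    (hf : (⁅K, ⊤⁆ : Subgroup G).subgroupOf K ≤ f.ker) : f = 1 := by
  have hmem {x : G} (hxH : x ∈ H) (g : G) : ⁅x, g⁆ ∈ K :=
    hK ▸ Subgroup.commutator_mem_commutator hxH (Subgroup.mem_top g)
  have hle : ⁅H, ⊤⁆ ≤ f.ker.map K.subtype := Subgroup.commutator_le.mpr fun x hxH g _ =>
    ⟨_, f.apply_commutator_eq_one (f.map_conjNormal_of_commutator_le_ker hf) (hmem hxH) g, rfl⟩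
  ext ⟨k, hk⟩
  obtain ⟨k', hk', rfl⟩ := hle (hK ▸ hk)
  exact hk'

theorem subsingleton_monoidHom_lowerCentralSeries_of_succ [Subsingleton (G →* A)] (n : ℕ)
    [Subsingleton ((⊤ : Subgroup G).lowerCentralSeries (n + 1) →* A)] :
    Subsingleton ((⊤ : Subgroup G).lowerCentralSeries n →* A) := by
  cases n with
  | zero =>
    let e : G ≃* (⊤ : Subgroup G) := Subgroup.topEquiv.symm
    exact e.surjective.subsingleton_monoidHom (f := e.toMonoidHom)
  | succ m =>
    refine subsingleton_of_forall_eq 1 fun f => f.eq_one_of_commutator_le_ker rfl fun k hk => ?_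
    have hres : f.comp (Subgroup.inclusion (Subgroup.lowerCentralSeries_antitone _
        (Nat.le_succ _))) = 1 :=
      Subsingleton.elim _ _
    exact DFunLike.congr_fun hres ⟨k, hk⟩

theorem subsingleton_monoidHom_lowerCentralSeries [Group.IsNilpotent G] [Subsingleton (G →* A)]
    (n : ℕ) : Subsingleton ((⊤ : Subgroup G).lowerCentralSeries n →* A) := by
  obtain ⟨c, hc⟩ := Subgroup.nilpotent_iff_lowerCentralSeries.mp ‹_›
  have hbot : (⊤ : Subgroup G).lowerCentralSeries (n + c) = ⊥ :=
    le_bot_iff.mp (hc ▸ Subgroup.lowerCentralSeries_antitone _ (Nat.le_add_left c n))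
  have : Subsingleton ((⊤ : Subgroup G).lowerCentralSeries (n + c)) := by
    rw [hbot]
    infer_instance
  exact Nat.decreasingInduction
    (motive := fun k _ => Subsingleton ((⊤ : Subgroup G).lowerCentralSeries k →* A))
    (fun k _ _ => subsingleton_monoidHom_lowerCentralSeries_of_succ k) inferInstance
    (Nat.le_add_right n c)

end LowerCentralSeries

section Finiteness

variable {Q : Type*} [Group Q]

theorem finite_of_lowerCentralSeries_eq_bot [Group.FG Q] [Subsingleton (Q →* Multiplicative ℤ)]
    {c : ℕ} (hc : (⊤ : Subgroup Q).lowerCentralSeries c = ⊥) : Finite Q := by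
  induction c generalizing Q with
  | zero =>
    have : Subsingleton Q := Subgroup.subsingleton_iff.mp (subsingleton_of_bot_eq_top hc.symm)
    infer_instance
  | succ c ih =>
    set K := (⊤ : Subgroup Q).lowerCentralSeries c
    have hmk := QuotientGroup.mk'_surjective K
    have : Group.FG (Q ⧸ K) := Group.fg_of_surjective hmk
    have : Subsingleton (Q ⧸ K →* Multiplicative ℤ) := hmk.subsingleton_monoidHom
    have : Finite (Q ⧸ K) := ih (by
      rw [← Subgroup.map_top_of_surjective _ hmk, ← Subgroup.map_lowerCentralSeries,
        QuotientGroup.map_mk'_self])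
    have hK : K ≤ Subgroup.center Q := by
      rw [← Subgroup.centralizer_univ, ← Subgroup.coe_top]
      exact Subgroup.commutator_eq_bot_iff_le_centralizer.mp hc
    have : IsMulCommutative K :=
      ⟨⟨fun a b => Subtype.ext (Subgroup.mem_center_iff.mp (hK b.2) a)⟩⟩
    have : K.FiniteIndex := Subgroup.finiteIndex_of_finite_quotient
    have : Group.IsNilpotent Q := Subgroup.nilpotent_iff_lowerCentralSeries.mpr ⟨_, hc⟩
    have : Subsingleton (K →* Multiplicative ℤ) := subsingleton_monoidHom_lowerCentralSeries c
    have : Finite K := finite_of_isMulCommutative_of_subsingleton_monoidHom_int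
    exact Finite.of_subgroup_quotient K

theorem Group.IsNilpotent.upperFinite_iff [Group.IsNilpotent Q] :
    UpperFinite Q ↔ Subsingleton (Q →* Multiplicative ℤ) := by
  refine ⟨fun hQ => hQ.subsingleton_monoidHom, fun _ N _ _ => ?_⟩
  have : Subsingleton (Q ⧸ N →* Multiplicative ℤ) :=
    (QuotientGroup.mk'_surjective N).subsingleton_monoidHom
  obtain ⟨c, hc⟩ :=
    Subgroup.nilpotent_iff_lowerCentralSeries.mp (inferInstance : Group.IsNilpotent (Q ⧸ N))
  exact finite_of_lowerCentralSeries_eq_bot hc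

end Finiteness

/-- the derived subgroup of an upper-finite nilpotent group is upper-finite. -/
theorem stmt_11 (G : Type) [Group G] (hnil : Group.IsNilpotent G) (hG : UpperFinite G) :
    UpperFinite (commutator G) := by
  have : Subsingleton (G →* Multiplicative ℤ) := hG.subsingleton_monoidHom
  have : Subsingleton (commutator G →* Multiplicative ℤ) :=
    subsingleton_monoidHom_lowerCentralSeries 1
  exact Group.IsNilpotent.upperFinite_iff.mpr this
end

section
/- Let G be an upper-finite nilpotent group. Then every term γ_i(G) of the lower central series of G is upper-finite. -/
open scoped commutatorElement

theorem Group.fg_of_isCyclic_s12 (G : Type*) [Group G] [IsCyclic G] : Group.FG G := by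
  obtain ⟨g, hg⟩ := isCyclic_iff_exists_zpowers_eq_top.mp ‹IsCyclic G›
  exact Group.fg_iff.mpr ⟨{g}, by rw [← Subgroup.zpowers_eq_closure, hg], Set.finite_singleton g⟩

theorem CommGroup.exists_monoidHom_int_ne_one (Q : Type*) [CommGroup Q] [Group.FG Q]
    [Infinite Q] : ∃ f : Q →* Multiplicative ℤ, f ≠ 1 := by
  obtain ⟨n, ι, _, p, hp, e, ⟨f⟩⟩ := AddCommGroup.equiv_free_prod_directSum_zmod (Additive Q)
  cases n with
  | zero =>
    have : ∀ i, NeZero (p i ^ e i) := fun i => ⟨pow_ne_zero _ (hp i).ne_zero⟩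
    have : Finite (DirectSum ι fun i => ZMod (p i ^ e i)) :=
      Finite.of_equiv _ DFinsupp.equivFunOnFintype.symm
    have : Finite Q := Finite.of_equiv _ (f.toEquiv.symm.trans Additive.toMul)
    exact (not_finite Q).elim
  | succ m =>
    let proj : Additive Q →+ ℤ :=
      (Finsupp.applyAddHom 0).comp ((AddMonoidHom.fst _ _).comp f.toAddMonoidHom)
    refine ⟨AddMonoidHom.toMultiplicativeRight proj, fun h => ?_⟩
    have := DFunLike.congr_fun h (Additive.toMul (f.symm (Finsupp.single 0 1, 0)))
    simp [proj] at this

namespace UpperFinite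

variable {G H : Type*} [Group G] [Group H]

theorem of_finite [Finite G] : UpperFinite G :=
  fun _ _ _ => inferInstance

theorem of_surjective (hG : UpperFinite G) (f : G →* H) (hf : Function.Surjective f) :
    UpperFinite H := by
  intro N _ hFG
  let g := (QuotientGroup.mk' N).comp f
  let e := QuotientGroup.quotientKerEquivOfSurjective g ((QuotientGroup.mk'_surjective N).comp hf)
  have : Finite (G ⧸ g.ker) :=
    hG g.ker (Group.fg_of_surjective (f := e.symm.toMonoidHom) e.symm.surjective)
  exact Finite.of_equiv _ e.toEquiv

theorem finite [Group.FG G] (hG : UpperFinite G) : Finite G := by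
  have : Finite (G ⧸ (⊥ : Subgroup G)) :=
    hG ⊥ (Group.fg_of_surjective (QuotientGroup.mk'_surjective ⊥))
  exact Finite.of_equiv _ QuotientGroup.quotientBot.toEquiv

theorem monoidHom_eq_one {A : Type*} [Group A] [IsCyclic A] [IsMulTorsionFree A]
    (hG : UpperFinite G) (φ : G →* A) : φ = 1 := by
  have : Group.FG φ.range := Group.fg_of_isCyclic_s12 _
  have : Finite φ.range := (hG.of_surjective _ φ.rangeRestrict_surjective).finite
  ext g
  have : IsOfFinOrder (⟨φ g, g, rfl⟩ : φ.range) := isOfFinOrder_of_finite _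
  exact (φ.range.subtype.isOfFinOrder this).eq_one'

theorem of_isMulCommutative [IsMulCommutative G] (h : ∀ φ : G →* Multiplicative ℤ, φ = 1) :
    UpperFinite G := by
  intro N _ _
  by_contra hinf
  have : Infinite (G ⧸ N) := not_finite_iff_infinite.mp hinf
  have : IsMulCommutative (G ⧸ N) :=
    Subgroup.Normal.quotient_commutative_iff_commutator_le.mpr (by simp [commutator_eq_bot])
  let : CommGroup (G ⧸ N) := IsMulCommutative.instCommGroup
  obtain ⟨f, hf⟩ := CommGroup.exists_monoidHom_int_ne_one (G ⧸ N)
  exact hf (QuotientGroup.monoidHom_ext N ((h _).trans (h _).symm))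

theorem of_subgroup_quotient (K : Subgroup G) [K.Normal] (hK : UpperFinite K)
    (hQ : UpperFinite (G ⧸ K)) : UpperFinite G := by
  intro N _ _
  let M := K.map (QuotientGroup.mk' N)
  have : M.Normal := Subgroup.Normal.map ‹_› _ (QuotientGroup.mk'_surjective N)
  let π := (QuotientGroup.mk' M).comp (QuotientGroup.mk' N)
  have hπ : K ≤ π.ker := fun k hk =>
    (QuotientGroup.eq_one_iff _).mpr (Subgroup.mem_map_of_mem _ hk)
  have : Group.FG ((G ⧸ N) ⧸ M) := Group.fg_of_surjective (QuotientGroup.mk'_surjective M)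
  have hπs : Function.Surjective π :=
    (QuotientGroup.mk'_surjective M).comp (QuotientGroup.mk'_surjective N)
  have : Finite ((G ⧸ N) ⧸ M) := (hQ.of_surjective (QuotientGroup.lift K π hπ)
    (QuotientGroup.lift_surjective_of_surjective K π hπs hπ)).finite
  have : M.FiniteIndex := Subgroup.finiteIndex_of_finite_quotient
  have : Group.FG M := Subgroup.fg_of_index_ne_zero M
  have : Finite M := (hK.of_surjective _ ((QuotientGroup.mk' N).subgroupMap_surjective K)).finite
  exact Finite.of_subgroup_quotient M

end UpperFinite

section LowerCentralSeries

variable {G : Type*} [Group G]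

theorem monoidHom_lowerCentralSeries_eq_one {A : Type*} [CommGroup A] (hG : ∀ f : G →* A, f = 1)
    (i : ℕ) (φ : (⊤ : Subgroup G).lowerCentralSeries i →* A)
    (hφ : ((⊤ : Subgroup G).lowerCentralSeries (i + 1)).subgroupOf _ ≤ φ.ker) : φ = 1 := by
  cases i with
  | zero =>
    ext ⟨g, _⟩
    exact DFunLike.congr_fun (hG (φ.comp Subgroup.topEquiv.symm.toMonoidHom)) g
  | succ j =>
    suffices (⊤ : Subgroup G).lowerCentralSeries (j + 1) ≤ φ.ker.map (Subgroup.subtype _) by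
      ext x
      obtain ⟨y, hy, hyx⟩ := this x.2
      rw [← Subtype.ext hyx]
      exact hy
    refine Subgroup.commutator_le.mpr fun p hp q _ => ?_
    have mem : ∀ r, ⁅p, r⁆ ∈ (⊤ : Subgroup G).lowerCentralSeries (j + 1) :=
      fun r => Subgroup.commutator_mem_commutator hp (Subgroup.mem_top r)
    let c : G → (⊤ : Subgroup G).lowerCentralSeries (j + 1) := fun r => ⟨⁅p, r⁆, mem r⟩
    have hc : ∀ q r, φ (c (q * r)) = φ (c q) * φ (c r) := by
      intro q r
      -- `⁅p, q * r⁆ = ⁅p, q⁆ * ⁅p, r⁆ * ⁅⁅p, r⁆⁻¹, q⁆`, and the last factor lies in `γ_{j+2}`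
      have hcorr : ⁅(c r : G)⁻¹, q⁆ ∈ (⊤ : Subgroup G).lowerCentralSeries (j + 2) :=
        Subgroup.commutator_mem_commutator (inv_mem (mem r)) (Subgroup.mem_top q)
      let d : (⊤ : Subgroup G).lowerCentralSeries (j + 1) :=
        ⟨_, Subgroup.lowerCentralSeries_antitone _ (j + 1).le_succ hcorr⟩
      have : c (q * r) = c q * c r * d :=
        Subtype.ext (by simp only [c, d, Subgroup.coe_mul, commutatorElement_def]; group)
      rw [this, map_mul, map_mul, hφ (x := d) hcorr, mul_one]
    exact ⟨c q, DFunLike.congr_fun (hG (MonoidHom.mk' (φ ∘ c) hc)) q, rfl⟩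

theorem UpperFinite.lowerCentralSeries_of_succ (hG : UpperFinite G) {i : ℕ}
    (h : UpperFinite ((⊤ : Subgroup G).lowerCentralSeries (i + 1))) :
    UpperFinite ((⊤ : Subgroup G).lowerCentralSeries i) := by
  let K := ((⊤ : Subgroup G).lowerCentralSeries (i + 1)).subgroupOf
    ((⊤ : Subgroup G).lowerCentralSeries i)
  let e := Subgroup.subgroupOfEquivOfLe
    (Subgroup.lowerCentralSeries_antitone (⊤ : Subgroup G) i.le_succ)
  have hK : UpperFinite K := h.of_surjective e.symm.toMonoidHom e.symm.surjective
  have : IsMulCommutative (_ ⧸ K) :=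
    Subgroup.Normal.quotient_commutative_iff_commutator_le.mpr <|
      Subgroup.commutator_le.mpr fun x _ y _ => Subgroup.mem_subgroupOf.mpr <| by
        simpa [commutatorElement_def] using
          Subgroup.commutator_mem_commutator x.2 (Subgroup.mem_top (y : G))
  refine UpperFinite.of_subgroup_quotient K hK (UpperFinite.of_isMulCommutative fun φ => ?_)
  refine QuotientGroup.monoidHom_ext K
    (monoidHom_lowerCentralSeries_eq_one hG.monoidHom_eq_one i _ ?_)
  intro k hk
  rw [MonoidHom.mem_ker, MonoidHom.comp_apply, QuotientGroup.mk'_apply,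
    (QuotientGroup.eq_one_iff k).mpr hk, map_one]

end LowerCentralSeries

/-- every term of the lower central series of an upper-finite nilpotent
group is upper-finite. -/
theorem stmt_12 (G : Type) [Group G] (hnil : Group.IsNilpotent G) (hG : UpperFinite G)
    (i : ℕ) : UpperFinite ((⊤ : Subgroup G).lowerCentralSeries i) := by
  obtain ⟨n, hn⟩ := Subgroup.nilpotent_iff_lowerCentralSeries.mp hnil
  have hbot : UpperFinite ((⊤ : Subgroup G).lowerCentralSeries (n + i)) := by
    rw [le_bot_iff.mp
      ((Subgroup.lowerCentralSeries_antitone _ (Nat.le_add_right n i)).trans hn.le)]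
    exact .of_finite
  exact Nat.decreasingInduction
    (motive := fun k _ => UpperFinite ((⊤ : Subgroup G).lowerCentralSeries k))
    (fun _ _ => hG.lowerCentralSeries_of_succ) hbot (Nat.le_add_left i n)
end

section
/- Let G be a torsion-free nilpotent group of finite Hirsch length. If the centre ζ(G) of G is finitely generated, then G is finitely generated. -/
/-!
Induct on the nilpotency class, passing from `G` to `G ⧸ ζ G`. By Mal'cev's lemma (in a
torsion-free nilpotent group, if `x ^ n` commutes with `y` then so does `x`) the quotient is again
torsion-free, and it inherits the uniform bound `n` on the ranks of finitely generated subgroups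
that finite Hirsch length provides. What remains is that `ζ (G ⧸ ζ G) = ζ₂ G ⧸ ζ G` is finitely
generated. The commutator map `x ↦ (g ↦ ⁅x, g⁆)` embeds `ζ₂ G ⧸ ζ G` into the power `ζ G ^ G`
of the free abelian group `ζ G ≅ ℤ ^ r`. Since finitely generated subgroups of `ζ₂ G` need at most
`n` generators, the `ℚ`-span of the image is finite-dimensional, so finitely many coordinates
`g ∈ s` already separate it: `ζ₂ G ⧸ ζ G` embeds into `ζ G ^ s`, which is finitely generated.
-/

/-- `H` has a subnormal series of length at most `n` with cyclic factors.
(A step `s i ◃ s (i+1)` has cyclic factor iff `s (i+1) = s i ⊔ ⟨x⟩` for some `x`.) -/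
def IsPolycyclicOfLengthLe (H : Type*) [Group H] (n : ℕ) : Prop :=
  ∃ m, m ≤ n ∧ ∃ s : Fin (m + 1) → Subgroup H, s 0 = ⊥ ∧ s (Fin.last m) = ⊤ ∧
    ∀ i : Fin m, s i.castSucc ≤ s i.succ ∧
      (∀ g ∈ s i.succ, ∀ k ∈ s i.castSucc, g * k * g⁻¹ ∈ s i.castSucc) ∧
      ∃ x : H, s i.succ = s i.castSucc ⊔ Subgroup.zpowers x

/-- `G` has finite Hirsch length: there is a uniform bound `n` such that every finitely
generated subgroup of `G` is polycyclic with a (sub)normal cyclic series of length ≤ `n`.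
(For torsion-free nilpotent groups this is equivalent to finite Hirsch length.) -/
def HasFiniteHirschLength (G : Type*) [Group G] : Prop :=
  ∃ n : ℕ, ∀ H : Subgroup G, Group.FG H → IsPolycyclicOfLengthLe H n

open scoped commutatorElement IsMulCommutative
open Module Submodule Multiplicative

section Commutator

variable {G : Type*} [Group G]

theorem commutatorElement_pow_right {a x : G} (h : Commute x ⁅a, x⁆) (n : ℕ) :
    ⁅a, x ^ n⁆ = ⁅a, x⁆ ^ n := by
  induction n with
  | zero => simp [commutatorElement_one_right]
  | succ k ih =>
    rw [pow_succ, commutatorElement_mul_right_eq_mul_conj, ih, mul_assoc _ (x ^ k),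
      (h.pow_left k).eq, ← mul_assoc, mul_inv_cancel_right, pow_succ]

theorem commutatorElement_mul_left_of_mem_center {x y g : G}
    (h : ⁅y, g⁆ ∈ Subgroup.center G) : ⁅x * y, g⁆ = ⁅x, g⁆ * ⁅y, g⁆ := by
  rw [commutatorElement_mul_left_eq_conj_mul, Subgroup.mem_center_iff.mp h x,
    mul_inv_cancel_right, Subgroup.mem_center_iff.mp h]

theorem commute_of_commute_pow [Group.IsNilpotent G] (htf : ∀ g : G, g ≠ 1 → ¬IsOfFinOrder g)
    {x y : G} {n : ℕ} (hn : n ≠ 0) (h : Commute y (x ^ n)) : Commute y x := by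
  set z : ℕ → G := fun k => (fun w => ⁅w, x⁆)^[k] y
  have z_succ (k : ℕ) : z (k + 1) = ⁅z k, x⁆ := Function.iterate_succ_apply' _ _ _
  have z_mem (k : ℕ) : z k ∈ (⊤ : Subgroup G).lowerCentralSeries k := by
    induction k with
    | zero => trivial
    | succ k ih => rw [z_succ]; exact Subgroup.commutator_mem_commutator ih (Subgroup.mem_top x)
  have z_commute (k : ℕ) : Commute (z k) (x ^ n) := by
    induction k with
    | zero => exact h
    | succ k ih =>
      have hx : Commute x (x ^ n) := (Commute.refl x).pow_right n
      rw [z_succ, commutatorElement_def]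
      exact ((ih.mul_left hx).mul_left ih.inv_left).mul_left hx.inv_left
  -- once `z (k + 2) = 1`, `x` commutes with `z (k + 1)`, so `z (k + 1) ^ n = ⁅z k, x ^ n⁆ = 1`
  have z_step (k : ℕ) (hk : z (k + 2) = 1) : z (k + 1) = 1 := by
    have hcomm : Commute x ⁅z k, x⁆ := by
      rw [← z_succ]
      exact (commutatorElement_eq_one_iff_commute.mp ((z_succ _).symm.trans hk)).symm
    have hpow : z (k + 1) ^ n = 1 := by
      rw [z_succ, ← commutatorElement_pow_right hcomm, (z_commute k).commutator_eq]
    by_contra hne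
    exact htf _ hne (isOfFinOrder_iff_pow_eq_one.mpr ⟨n, Nat.pos_of_ne_zero hn, hpow⟩)
  set N := Group.nilpotencyClass G
  have hN : z (N + 1) = 1 := by
    have := z_mem (N + 1)
    rwa [Subgroup.lowerCentralSeries_eq_bot_iff_nilpotencyClass_le.mpr (Nat.le_succ N),
      Subgroup.mem_bot] at this
  have h1 : z 1 = 1 :=
    Nat.decreasingInduction (motive := fun k _ => z (k + 1) = 1)
      (fun k _ hk => z_step k hk) hN (Nat.zero_le N)
  exact commutatorElement_eq_one_iff_commute.mp h1

theorem not_isOfFinOrder_quotient_center [Group.IsNilpotent G]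
    (htf : ∀ g : G, g ≠ 1 → ¬IsOfFinOrder g) (q : G ⧸ Subgroup.center G) (hq : q ≠ 1) :
    ¬IsOfFinOrder q := by
  obtain ⟨x, rfl⟩ := QuotientGroup.mk'_surjective _ q
  rw [isOfFinOrder_iff_pow_eq_one]
  rintro ⟨n, hn, hxn⟩
  rw [← map_pow, QuotientGroup.mk'_apply, QuotientGroup.eq_one_iff, Subgroup.mem_center_iff] at hxn
  refine hq ((QuotientGroup.eq_one_iff x).mpr (Subgroup.mem_center_iff.mpr fun g => ?_))
  exact commute_of_commute_pow htf hn.ne' (hxn g)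

theorem isMulTorsionFree_center (htf : ∀ g : G, g ≠ 1 → ¬IsOfFinOrder g) :
    IsMulTorsionFree (Subgroup.center G) :=
  (isMulTorsionFree_iff_not_isOfFinOrder (G := Subgroup.center G)).mpr fun z hz hfin =>
    htf z (fun h => hz (Subtype.ext h)) (Submonoid.isOfFinOrder_coe.mpr hfin)

end Commutator

section Finiteness

variable {G H : Type*} [Group G] [Group H]

theorem Group.fg_of_fg_ker_of_fg_range (f : G →* H) (hker : f.ker.FG) (hrange : f.range.FG) :
    Group.FG G := by
  classical
  obtain ⟨S, hS⟩ := hrange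
  have hSrange : (S : Set H) ⊆ f '' Set.univ := by
    rw [Set.image_univ, ← MonoidHom.coe_range, ← hS]
    exact Subgroup.subset_closure
  obtain ⟨T, -, hTS⟩ := Finset.subset_set_image_iff.mp hSrange
  have hT : Subgroup.closure (T : Set G) ⊔ f.ker = ⊤ := by
    rw [← codisjoint_iff, ← Subgroup.map_eq_range_iff, MonoidHom.map_closure, ← hS, ← hTS,
      Finset.coe_image]
  rw [Group.fg_def, ← hT]
  exact Subgroup.FG.sup ⟨T, rfl⟩ hker

theorem Subgroup.fg_of_commGroup {A : Type*} [CommGroup A] [Group.FG A] (K : Subgroup A) :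
    K.FG := by
  have : Module.Finite ℤ (Additive A) := Module.Finite.iff_addGroup_fg.mpr inferInstance
  rw [Subgroup.fg_iff_add_fg]
  exact (Submodule.fg_iff_addSubgroup_fg _).mp
    (IsNoetherian.noetherian K.toAddSubgroup.toIntSubmodule)

end Finiteness

def FGSubgroupsRankLE (n : ℕ) (G : Type*) [Group G] : Prop :=
  ∀ (H : Subgroup G) [Group.FG H], Group.rank H ≤ n

namespace FGSubgroupsRankLE

variable {n : ℕ} {G Q : Type*} [Group G] [Group Q]

theorem subgroup (hG : FGSubgroupsRankLE n G) (K : Subgroup G) : FGSubgroupsRankLE n K := by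
  intro H _
  let e := H.equivMapOfInjective K.subtype K.subtype_injective
  have : Group.FG (H.map K.subtype) := Group.fg_of_surjective (f := e.toMonoidHom) e.surjective
  exact (Group.rank_congr e).trans_le (hG _)

theorem of_surjective (hG : FGSubgroupsRankLE n G) {f : G →* Q} (hf : Function.Surjective f) :
    FGSubgroupsRankLE n Q := by
  classical
  intro H hH
  obtain ⟨S, hS⟩ := (Group.fg_iff_subgroup_fg H).mp hH
  have hSrange : (S : Set Q) ⊆ f '' Set.univ := by
    rw [Set.image_univ, hf.range_eq]
    exact Set.subset_univ _
  obtain ⟨T, -, rfl⟩ := Finset.subset_set_image_iff.mp hSrange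
  have hmap : (Subgroup.closure (T : Set G)).map f = H := by
    rw [MonoidHom.map_closure, ← Finset.coe_image, hS]
  subst hmap
  exact (Group.rank_le_of_surjective _ (f.subgroupMap_surjective _)).trans (hG _)

end FGSubgroupsRankLE

theorem IsPolycyclicOfLengthLe.rank_le {H : Type*} [Group H] [Group.FG H] {n : ℕ}
    (h : IsPolycyclicOfLengthLe H n) : Group.rank H ≤ n := by
  classical
  obtain ⟨m, hmn, s, hs0, hstop, hstep⟩ := h
  choose x hx using fun i => (hstep i).2.2
  have hle (i : Fin (m + 1)) : s i ≤ Subgroup.closure (Set.range x) := by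
    induction i using Fin.induction with
    | zero => simp [hs0]
    | succ i ih =>
      rw [hx i]
      exact sup_le ih (Subgroup.zpowers_le.mpr (Subgroup.subset_closure (Set.mem_range_self i)))
  calc Group.rank H ≤ (Finset.univ.image x).card := Group.rank_le <| by
        rw [Finset.coe_image, Finset.coe_univ, Set.image_univ, eq_top_iff, ← hstop]
        exact hle _
    _ ≤ m := Finset.card_image_le.trans (by simp)
    _ ≤ n := hmn

theorem HasFiniteHirschLength.exists_fgSubgroupsRankLE {G : Type*} [Group G]
    (h : HasFiniteHirschLength G) : ∃ n, FGSubgroupsRankLE n G := by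
  obtain ⟨n, hn⟩ := h
  exact ⟨n, fun H _ => (hn H ‹_›).rank_le⟩

theorem Submodule.exists_finset_eq_zero_of_forall_apply_eq_zero {K J : Type*} [Field K]
    (W : Submodule K (J → K)) [FiniteDimensional K W] :
    ∃ s : Finset J, ∀ w ∈ W, (∀ j ∈ s, w j = 0) → w = 0 := by
  classical
  let V (s : Finset J) : Submodule K W :=
    ⨅ j ∈ s, LinearMap.ker ((LinearMap.proj j).comp W.subtype)
  obtain ⟨_, ⟨s, rfl⟩, hmin⟩ :=
    IsArtinian.set_has_minimal (Set.range V) (Set.range_nonempty V)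
  refine ⟨s, fun w hw hs => by_contra fun hne => ?_⟩
  obtain ⟨j, hj⟩ : ∃ j, w j ≠ 0 := Function.ne_iff.mp hne
  refine hmin (V (insert j s)) ⟨_, rfl⟩
    (SetLike.lt_iff_le_and_exists.mpr ⟨?_, ⟨w, hw⟩, ?_, ?_⟩)
  · exact biInf_mono fun i hi => Finset.mem_insert_of_mem hi
  · simpa [V] using hs
  · simp [V, hj]

section FiniteRank

variable {A V K : Type*} [Group A] [Field K] [AddCommGroup V] [Module K V] {n : ℕ}

theorem toAdd_mem_span_of_mem_closure (c : A →* Multiplicative V) {X : Set A} {x : A}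
    (hx : x ∈ Subgroup.closure X) : toAdd (c x) ∈ span K ((toAdd ∘ c) '' X) := by
  induction hx using Subgroup.closure_induction with
  | mem y hy => exact subset_span (Set.mem_image_of_mem _ hy)
  | one => simp
  | mul y z _ _ hy hz => simpa using add_mem hy hz
  | inv y _ hy => simpa using neg_mem hy

theorem FGSubgroupsRankLE.finrank_span_le (hA : FGSubgroupsRankLE n A)
    (c : A →* Multiplicative V) (S : Finset A) : finrank K (span K ((toAdd ∘ c) '' S)) ≤ n := by
  classical
  let H := Subgroup.closure (S : Set A)
  obtain ⟨T, hTcard, hT⟩ := Group.rank_spec H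
  let T' : Finset V := (T.image H.subtype).image (toAdd ∘ c)
  have hspan : span K ((toAdd ∘ c) '' S) ≤ span K (T' : Set V) := by
    have hH : Subgroup.closure (T.image H.subtype : Set A) = H := by
      rw [Finset.coe_image, ← MonoidHom.map_closure, hT, ← MonoidHom.range_eq_map,
        Subgroup.range_subtype]
    rw [span_le, Finset.coe_image]
    rintro _ ⟨x, hx, rfl⟩
    have hxH : x ∈ H := Subgroup.subset_closure hx
    rw [← hH] at hxH
    exact toAdd_mem_span_of_mem_closure c hxH
  calc finrank K (span K ((toAdd ∘ c) '' S)) ≤ finrank K (span K (T' : Set V)) :=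
        Submodule.finrank_mono hspan
    _ ≤ T.card := (finrank_span_finset_le_card (R := K) T').trans
        (Finset.card_image_le.trans Finset.card_image_le)
    _ ≤ n := hTcard.trans_le (hA H)

theorem FGSubgroupsRankLE.exists_finset_forall_mem_span (hA : FGSubgroupsRankLE n A)
    (c : A →* Multiplicative V) :
    ∃ S : Finset A, ∀ x, toAdd (c x) ∈ span K ((toAdd ∘ c) '' S) := by
  classical
  let d (S : Finset A) := finrank K (span K ((toAdd ∘ c) '' S))
  let P (m : ℕ) := ∃ S, d S = m
  have hP0 : P 0 := ⟨∅, by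
    simp only [d]
    rw [Finset.coe_empty, Set.image_empty, span_empty]
    exact finrank_bot K V⟩
  obtain ⟨S, hS⟩ : P (Nat.findGreatest P n) := Nat.findGreatest_spec (Nat.zero_le n) hP0
  refine ⟨S, fun x => ?_⟩
  have hle : span K ((toAdd ∘ c) '' S) ≤ span K ((toAdd ∘ c) '' ↑(insert x S)) :=
    span_mono (Set.image_mono (Finset.coe_subset.mpr (Finset.subset_insert x S)))
  have : FiniteDimensional K (span K ((toAdd ∘ c) '' ↑(insert x S))) :=
    FiniteDimensional.span_of_finite K ((insert x S).finite_toSet.image _)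
  have hmax : d (insert x S) ≤ d S :=
    hS ▸ Nat.le_findGreatest (hA.finrank_span_le c _) ⟨_, rfl⟩
  rw [eq_of_le_of_finrank_eq hle ((finrank_mono hle).antisymm hmax)]
  exact subset_span ⟨x, by simp, rfl⟩

theorem FGSubgroupsRankLE.exists_finset_forall_eq_one {J Z : Type*} [CommGroup Z] [Group.FG Z]
    [IsMulTorsionFree Z] (hA : FGSubgroupsRankLE n A) (ψ : A →* (J → Z)) :
    ∃ s : Finset J, ∀ x, (∀ j ∈ s, ψ x j = 1) → ψ x = 1 := by
  classical
  have : Module.Finite ℤ (Additive Z) := Module.Finite.iff_addGroup_fg.mpr inferInstance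
  have : Module.IsTorsionFree ℤ (Additive Z) :=
    Module.isTorsionFree_int_iff_isAddTorsionFree.mpr inferInstance
  let b := Module.Free.chooseBasis ℤ (Additive Z)
  -- the coordinates of `ψ` with respect to a `ℤ`-basis of `Z`, read in `ℚ`
  let c : A →* Multiplicative (J × Module.Free.ChooseBasisIndex ℤ (Additive Z) → ℚ) :=
    { toFun x := ofAdd fun p => (b.repr (Additive.ofMul (ψ x p.1)) p.2 : ℚ)
      map_one' := by ext; simp
      map_mul' x y := by ext; simp [ofMul_mul] }
  obtain ⟨S, hS⟩ := hA.exists_finset_forall_mem_span (K := ℚ) c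
  have : FiniteDimensional ℚ (span ℚ ((toAdd ∘ c) '' S)) :=
    FiniteDimensional.span_of_finite ℚ (S.finite_toSet.image _)
  obtain ⟨s, hs⟩ :=
    exists_finset_eq_zero_of_forall_apply_eq_zero (span ℚ ((toAdd ∘ c) '' S))
  refine ⟨s.image Prod.fst, fun x hx => funext fun j => ?_⟩
  have hcx : toAdd (c x) = 0 :=
    hs _ (hS x) fun p hp => by simp [c, hx p.1 (Finset.mem_image_of_mem _ hp)]
  refine Additive.ofMul.injective (b.repr.injective (Finsupp.ext fun i => ?_))
  simpa [c] using congrFun hcx (j, i)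

end FiniteRank

section SecondCenter

variable {G : Type*} [Group G]

theorem commutatorElement_mem_center_of_mem_upperCentralSeries_two {x : G}
    (hx : x ∈ Subgroup.upperCentralSeries G 2) (g : G) : ⁅x, g⁆ ∈ Subgroup.center G := by
  rw [← Subgroup.upperCentralSeries_one]
  exact Subgroup.mem_upperCentralSeries_succ_iff.mp hx g

def commutatorPairing : Subgroup.upperCentralSeries G 2 →* (G → Subgroup.center G) where
  toFun x g := ⟨⁅(x : G), g⁆, commutatorElement_mem_center_of_mem_upperCentralSeries_two x.2 g⟩
  map_one' := by ext; simp [commutatorElement_one_left]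
  map_mul' x y := by
    ext g
    simp [commutatorElement_mul_left_of_mem_center
      (commutatorElement_mem_center_of_mem_upperCentralSeries_two y.2 g)]

theorem commutatorPairing_eq_one_iff {x : Subgroup.upperCentralSeries G 2} :
    commutatorPairing x = 1 ↔ (x : G) ∈ Subgroup.center G := by
  simp [funext_iff, Subtype.ext_iff, commutatorPairing, Subgroup.mem_center_iff,
    commutatorElement_eq_one_iff_commute, Commute, SemiconjBy, eq_comm]

theorem fg_center_quotient_center [Group.FG (Subgroup.center G)]
    [IsMulTorsionFree (Subgroup.center G)] {n : ℕ} (hG : FGSubgroupsRankLE n G) :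
    Group.FG (Subgroup.center (G ⧸ Subgroup.center G)) := by
  let Z₂ := Subgroup.upperCentralSeries G 2
  obtain ⟨s, hs⟩ := (hG.subgroup Z₂).exists_finset_forall_eq_one (J := G)
    (Z := Subgroup.center G) commutatorPairing
  let φ : Z₂ →* (s → Subgroup.center G) :=
    (MonoidHom.pi fun j : s => Pi.evalMonoidHom _ j.1).comp commutatorPairing
  have hker : φ.ker = (Subgroup.center G).subgroupOf Z₂ := by
    ext x
    rw [MonoidHom.mem_ker, Subgroup.mem_subgroupOf, ← commutatorPairing_eq_one_iff]
    refine ⟨fun hx => hs x fun j hj => congrFun hx ⟨j, hj⟩, fun hx => ?_⟩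
    ext j
    simp [φ, hx]
  have hcenter : Subgroup.center G ≤ Z₂ := by
    rw [← Subgroup.upperCentralSeries_one]
    exact Subgroup.upperCentralSeries_mono G one_le_two
  have hZ₂ : Group.FG Z₂ := by
    refine Group.fg_of_fg_ker_of_fg_range φ ?_ (Subgroup.fg_of_commGroup _)
    rw [hker, ← Group.fg_iff_subgroup_fg]
    exact Group.fg_of_surjective (f := (Subgroup.subgroupOfEquivOfLe hcenter).symm.toMonoidHom)
      (MulEquiv.surjective _)
  have hmap : Z₂.map (QuotientGroup.mk' _) = Subgroup.center (G ⧸ Subgroup.center G) := by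
    rw [← Subgroup.map_comap_eq_self_of_surjective (QuotientGroup.mk'_surjective _)
      (Subgroup.center _), ← Subgroup.upperCentralSeries_one (G ⧸ Subgroup.center G),
      Subgroup.comap_upperCentralSeries_quotient_center]
  rw [← hmap]
  exact Group.fg_of_surjective (MonoidHom.subgroupMap_surjective _ Z₂)

end SecondCenter

theorem Group.fg_of_fg_center {n : ℕ} {G : Type*} [Group G] [Group.IsNilpotent G]
    (htf : ∀ g : G, g ≠ 1 → ¬IsOfFinOrder g) (hG : FGSubgroupsRankLE n G)
    (hZ : Group.FG (Subgroup.center G)) : Group.FG G := by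
  revert htf hG hZ
  refine Group.nilpotent_center_quotient_ind
    (P := fun G _ _ => (∀ g : G, g ≠ 1 → ¬IsOfFinOrder g) → FGSubgroupsRankLE n G →
      Group.FG (Subgroup.center G) → Group.FG G)
    G (fun _ _ _ _ _ _ => inferInstance) fun G _ _ ih htf hG hZ => ?_
  have := isMulTorsionFree_center htf
  have hQ : Group.FG (G ⧸ Subgroup.center G) :=
    ih (not_isOfFinOrder_quotient_center htf)
      (hG.of_surjective (QuotientGroup.mk'_surjective _)) (fg_center_quotient_center hG)
  refine Group.fg_of_fg_ker_of_fg_range (QuotientGroup.mk' (Subgroup.center G)) ?_ ?_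
  · rwa [QuotientGroup.ker_mk', ← Group.fg_iff_subgroup_fg]
  · rwa [MonoidHom.range_eq_top_of_surjective _ (QuotientGroup.mk'_surjective _),
      ← Group.fg_def]

/-- a torsion-free nilpotent group of finite Hirsch length with finitely
generated centre is finitely generated. -/
theorem stmt_13 (G : Type) [Group G] (hnil : Group.IsNilpotent G)
    (htf : ∀ g : G, g ≠ 1 → ¬ IsOfFinOrder g)
    (hh : HasFiniteHirschLength G)
    (hz : Group.FG (Subgroup.center G)) :
    Group.FG G := by
  obtain ⟨n, hn⟩ := hh.exists_fgSubgroupsRankLE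
  exact Group.fg_of_fg_center htf hn hz
end
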